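/- arXiv:2410.12752 — 8 statements merged into one kernel-verified Lean document; each statement's English description precedes it below -/
import Mathlib

section
/- Let M = (m_{ij}) be a k×k matrix over the polynomial ring ℂ[x_0, x_1, x_2, ...] where each entry m_{ij} = c_{ij} x_{t(i,j)} is a scalar multiple of a single variable. Suppose all diagonal coefficients c_{ii} are nonzero, and for all i, j with c_{ij} ≠ 0, every entry m_{lm} with l ≤ i and m ≥ j, (l,m) ≠ (i,j), satisfies either c_{lm} = 0 or t(i,j) < t(l,m). Then, with respect to the lexicographic-type total monomial order induced by the variable order x_0 ≺ x_1 ≺ x_2 ≺ ... (comparing monomials by their largest variable, then recursively), the smallest monomial appearing with nonzero coefficient in det(M) is the diagonal product m_{11} m_{22} ⋯ m_{kk}. -/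
/-!
Expanding the determinant, the term of a permutation `σ` is `sgn σ · ∏ c (σ i) i` times the
monomial collecting the variables `t (σ i) i`; only permutations with all these coefficients
nonzero contribute. For such `σ ≠ 1` and any index `j` moved by `σ`, counting shows that some
`j' ≥ j` has `σ j' ≤ j`; then `j'` is moved too and the entry `(σ j', j')` lies weakly up-right
of `(j, j)`, so `t j j < t (σ j') j'`. Hence the largest variable at the moved positions of `σ`
beats every diagonal variable at those positions, while the fixed positions contribute the same
variables to both monomials: the monomial of `σ` is strictly above the diagonal one. So no
other term can cancel the diagonal term, and every other monomial of the support lies above it.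
-/

/-- `MinLT m m'` : the monomial `m` is strictly smaller than `m'` in the total order
on monomials of ℂ[x_0, x_1, ...] obtained by comparing the largest variables first,
then recursively: there is a variable `v` with `m v < m' v` and `m w = m' w` for all
`w > v`. -/
def MinLT (m m' : ℕ →₀ ℕ) : Prop := ∃ v, m v < m' v ∧ ∀ w, v < w → m w = m' w

open Finset Equiv MvPolynomial

theorem MinLT.ne {a b : ℕ →₀ ℕ} (h : MinLT a b) : a ≠ b := by
  rintro rfl
  obtain ⟨v, hv, -⟩ := h
  exact hv.false

theorem MinLT.add_left {a b : ℕ →₀ ℕ} (h : MinLT a b) (c : ℕ →₀ ℕ) :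
    MinLT (c + a) (c + b) := by
  obtain ⟨v, hv, heq⟩ := h
  refine ⟨v, ?_, fun w hw => ?_⟩
  · simpa using hv
  · simp [heq w hw]

theorem Finsupp.sum_single_one_apply {ι α : Type*} [DecidableEq α] (F : Finset ι)
    (f : ι → α) (a : α) : (∑ i ∈ F, Finsupp.single (f i) 1) a = #{i ∈ F | f i = a} := by
  simp [Finsupp.finsetSum_apply, Finsupp.single_apply]

theorem minLT_sum_single {ι : Type*} {F : Finset ι} (hF : F.Nonempty) {f g : ι → ℕ}
    (hlt : ∀ i ∈ F, ∃ j ∈ F, g i < f j) :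
    MinLT (∑ i ∈ F, Finsupp.single (g i) 1) (∑ i ∈ F, Finsupp.single (f i) 1) := by
  obtain ⟨j₀, hj₀, hsup⟩ := F.exists_mem_eq_sup' hF f
  have hg : ∀ i ∈ F, g i < f j₀ := fun i hi => by
    obtain ⟨j, hj, hij⟩ := hlt i hi
    exact hij.trans_le (hsup ▸ F.le_sup' f hj)
  have hf : ∀ i ∈ F, f i ≤ f j₀ := fun i hi => hsup ▸ F.le_sup' f hi
  refine ⟨f j₀, ?_, fun w hw => ?_⟩
  · simp only [Finsupp.sum_single_one_apply]
    rw [filter_false_of_mem fun i hi => (hg i hi).ne, card_empty, card_pos]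
    exact ⟨j₀, mem_filter.2 ⟨hj₀, rfl⟩⟩
  · simp only [Finsupp.sum_single_one_apply]
    rw [filter_false_of_mem fun i hi => ((hg i hi).trans hw).ne,
      filter_false_of_mem fun i hi => ((hf i hi).trans_lt hw).ne]

theorem Equiv.Perm.exists_le_apply_le {α : Type*} [LinearOrder α] [LocallyFiniteOrderTop α]
    (σ : Perm α) (j : α) : ∃ j', j ≤ j' ∧ σ j' ≤ j := by
  by_contra! h
  have hmaps : Set.MapsTo σ (Ici j) (Ioi j) := fun x hx => mem_Ioi.2 (h x (mem_Ici.1 hx))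
  have hle := card_le_card_of_injOn σ hmaps σ.injective.injOn
  have hpos : 0 < #(Ici j) := card_pos.2 nonempty_Ici
  rw [card_Ioi_eq_card_Ici_sub_one] at hle
  omega

noncomputable def permDegree {n V : Type*} [Fintype n] (t : n → n → V) (σ : Perm n) :
    V →₀ ℕ :=
  ∑ i, Finsupp.single (t (σ i) i) 1

theorem det_C_mul_X {n R V : Type*} [Fintype n] [DecidableEq n] [CommRing R]
    (c : n → n → R) (t : n → n → V) :
    (Matrix.of fun i j => C (c i j) * X (t i j) : Matrix n n (MvPolynomial V R)).det =
      ∑ σ : Perm n, Perm.sign σ • monomial (permDegree t σ) (∏ i, c (σ i) i) := by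
  refine (Matrix.det_apply _).trans (sum_congr rfl fun σ _ => ?_)
  simp only [Matrix.of_apply, C_mul_X_eq_monomial, permDegree, monomial_sum_prod]

theorem coeff_det_C_mul_X {n R V : Type*} [Fintype n] [DecidableEq n] [CommRing R]
    [DecidableEq V] (c : n → n → R) (t : n → n → V) (m : V →₀ ℕ) :
    coeff m (Matrix.of fun i j => C (c i j) * X (t i j) : Matrix n n (MvPolynomial V R)).det =
      ∑ σ with permDegree t σ = m, Perm.sign σ • ∏ i, c (σ i) i := by
  rw [det_C_mul_X, coeff_sum, sum_filter]
  refine sum_congr rfl fun σ _ => ?_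
  rw [coeff_smul, coeff_monomial]
  split_ifs <;> simp

section Triangular

variable {n : Type*} [LinearOrder n] {R : Type*} [Zero R]

def UpRightIncreasing (c : n → n → R) (t : n → n → ℕ) : Prop :=
  ∀ i j, c i j ≠ 0 → ∀ l m, l ≤ i → j ≤ m → (l, m) ≠ (i, j) → c l m = 0 ∨ t i j < t l m

variable {c : n → n → R} {t : n → n → ℕ}

theorem UpRightIncreasing.exists_apply_ne_lt [LocallyFiniteOrderTop n]
    (ht : UpRightIncreasing c t) (hdiag : ∀ i, c i i ≠ 0)
    {σ : Perm n} (hc : ∀ i, c (σ i) i ≠ 0) {j : n} (hj : σ j ≠ j) :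
    ∃ j', σ j' ≠ j' ∧ t j j < t (σ j') j' := by
  obtain ⟨j', hjj', hσj'⟩ := σ.exists_le_apply_le j
  have hmoved : σ j' ≠ j' := fun h => hj <| by
    obtain rfl : j' = j := le_antisymm (h ▸ hσj') hjj'
    exact h
  have hne : (σ j', j') ≠ (j, j) := fun h => hmoved <| by
    rw [Prod.mk.injEq] at h
    rw [h.1, h.2]
  exact ⟨j', hmoved, (ht j j (hdiag j) (σ j') j' hσj' hjj' hne).resolve_left (hc j')⟩

theorem UpRightIncreasing.minLT_permDegree [LocallyFiniteOrderTop n] [Fintype n]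
    (ht : UpRightIncreasing c t) (hdiag : ∀ i, c i i ≠ 0)
    {σ : Perm n} (hσ : σ ≠ 1) (hc : ∀ i, c (σ i) i ≠ 0) :
    MinLT (permDegree t 1) (permDegree t σ) := by
  have hF : σ.support.Nonempty := nonempty_iff_ne_empty.2 (mt Perm.support_eq_empty_iff.1 hσ)
  have hfixed : ∑ i ∈ σ.supportᶜ, Finsupp.single (t (σ i) i) 1 =
      ∑ i ∈ σ.supportᶜ, Finsupp.single (t i i) 1 :=
    sum_congr rfl fun i hi => by rw [Perm.notMem_support.1 (mem_compl.1 hi)]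
  unfold permDegree
  rw [← sum_compl_add_sum σ.support, ← sum_compl_add_sum σ.support, hfixed]
  refine (minLT_sum_single hF fun j hj => ?_).add_left _
  obtain ⟨j', hj', hlt⟩ := ht.exists_apply_ne_lt hdiag hc (Perm.mem_support.1 hj)
  exact ⟨j', Perm.mem_support.2 hj', hlt⟩

end Triangular

/-- for a k×k matrix whose entries are scalar multiples of single
variables, with nonzero diagonal coefficients, such that every nonzero entry to the
upper right of a nonzero entry carries a strictly larger variable, the smallest
monomial with nonzero coefficient in det(M) is the diagonal product. -/
theorem stmt_3 (k : ℕ) (c : Fin k → Fin k → ℂ) (t : Fin k → Fin k → ℕ)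
    (hdiag : ∀ i, c i i ≠ 0)
    (hupright : ∀ i j, c i j ≠ 0 → ∀ l m, l ≤ i → j ≤ m → (l, m) ≠ (i, j) →
      c l m = 0 ∨ t i j < t l m) :
    let M : Matrix (Fin k) (Fin k) (MvPolynomial ℕ ℂ) :=
      fun i j => MvPolynomial.C (c i j) * MvPolynomial.X (t i j)
    let D : ℕ →₀ ℕ := ∑ i, Finsupp.single (t i i) 1
    MvPolynomial.coeff D M.det ≠ 0 ∧
      ∀ m ∈ M.det.support, m ≠ D → MinLT D m := by
  intro M D
  have hcoeff (m) :
      coeff m M.det = ∑ σ with permDegree t σ = m, Perm.sign σ • ∏ i, c (σ i) i :=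
    coeff_det_C_mul_X c t m
  have hmin (σ : Perm (Fin k)) (hσ : σ ≠ 1) (hc : ∏ i, c (σ i) i ≠ 0) :
      MinLT D (permDegree t σ) :=
    UpRightIncreasing.minLT_permDegree hupright hdiag hσ fun i =>
      prod_ne_zero_iff.1 hc i (mem_univ i)
  constructor
  · have hD : (1 : Perm (Fin k)) ∈ ({σ | permDegree t σ = D} : Finset _) :=
      mem_filter.2 ⟨mem_univ _, rfl⟩
    rw [hcoeff, sum_eq_single_of_mem 1 hD]
    · simpa [prod_ne_zero_iff] using hdiag
    · intro σ hσD hσ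
      by_contra hne
      exact (hmin σ hσ ((smul_ne_zero_iff_ne _).1 hne)).ne (mem_filter.1 hσD).2.symm
  · intro m hm hmD
    rw [mem_support_iff, hcoeff] at hm
    obtain ⟨σ, hσm, hne⟩ := exists_ne_zero_of_sum_ne_zero hm
    obtain rfl := (mem_filter.1 hσm).2
    have hσ : σ ≠ 1 := by rintro rfl; exact hmD rfl
    exact hmin σ hσ ((smul_ne_zero_iff_ne _).1 hne)
end

section
/- The family of determinants { det Δ_0(α) : α a strictly increasing finite sequence of naturals } is a basis of the polynomial ring E = ℂ[x, x', x'', ...] as a ℂ-vector space. -/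
/-!
Expanding `det Δ₀(α)` over permutations, the term of `σ` is a multiple of the monomial
`∏ᵢ x^{(αᵢ - σ(i))}`, nonzero only when `σ(i) ≤ αᵢ` for all `i`. All these monomials have the
same weight (with `x^{(k)}` of weight `k + 1`), and among them the diagonal one
`∏ᵢ x^{(αᵢ - i)}` is lexicographically smallest: a transposition moving the first non-fixed
point of `σ` back into place strictly decreases the exponent. Since `α ↦ {αᵢ - i}` is a bijection
from strictly increasing sequences onto multisets of naturals, i.e. onto monomials, the family
is triangular with respect to the monomial basis, for an order (weight, then reversed lex) whose
strict part is well founded because each weight class is finite.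
-/

open Finset Finsupp MvPolynomial Equiv

theorem Fin.add_sub_le_of_strictMono {n : ℕ} {α : Fin n → ℕ} (hα : StrictMono α) {i j : Fin n}
    (hij : i ≤ j) : α i + ((j : ℕ) - i) ≤ α j := by
  suffices ∀ k (hk : k < n), (i : ℕ) ≤ k → α i + (k - i) ≤ α ⟨k, hk⟩ from this j j.2 hij
  intro k
  induction k with
  | zero =>
    intro hk hi
    obtain rfl : i = ⟨0, hk⟩ := Fin.ext (Nat.le_zero.1 hi)
    simp
  | succ k ih =>
    intro hk hi
    obtain hi | hi := (show (i : ℕ) = k + 1 ∨ (i : ℕ) ≤ k by omega)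
    · obtain rfl : i = ⟨k + 1, hk⟩ := Fin.ext hi
      simp
    · have := ih (by omega) hi
      have := hα (show (⟨k, by omega⟩ : Fin n) < ⟨k + 1, hk⟩ from Fin.mk_lt_mk.2 (by omega))
      omega

theorem Fin.val_le_of_strictMono {n : ℕ} {α : Fin n → ℕ} (hα : StrictMono α) (i : Fin n) :
    (i : ℕ) ≤ α i := by
  have := Fin.add_sub_le_of_strictMono hα (i := ⟨0, i.pos⟩) (Fin.le_def.2 (Nat.zero_le i))
  dsimp only at this
  omega

theorem Fin.monotone_sub_val_of_strictMono {n : ℕ} {α : Fin n → ℕ} (hα : StrictMono α) :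
    Monotone fun i : Fin n => α i - i := fun i j hij => by
  dsimp only
  have := Fin.add_sub_le_of_strictMono hα hij
  have := Fin.val_le_of_strictMono hα i
  omega

theorem Finsupp.finite_weight_succ_le (W : ℕ) :
    {m : ℕ →₀ ℕ | weight (· + 1) m ≤ W}.Finite := by
  refine (Set.finite_Iic (indicator (range W) fun _ _ => W)).subset fun m hm k => ?_
  rw [indicator_apply]
  split_ifs with hk
  · exact (le_weight (· + 1) k.succ_ne_zero m).trans hm
  · by_contra hmk
    have := (le_weight_of_ne_zero' (fun k : ℕ => k + 1) (s := k) (by omega)).trans hm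
    rw [mem_range] at hk
    omega

theorem Finsupp.toLex_single_add_single_lt {ι : Type*} [LinearOrder ι] {w x y z : ι}
    (hx : w < x) (hy : w < y) (hz : w < z) :
    toLex (single x 1 + single y 1 : ι →₀ ℕ) < toLex (single w 1 + single z 1) := by
  refine Finsupp.Lex.lt_iff.2 ⟨w, fun k hk => ?_, ?_⟩ <;>
    simp only [ofLex_toLex, coe_add, Pi.add_apply, single_apply] <;> grind

namespace MvPolynomial

variable {σ ι K β : Type*} [Field K] [LinearOrder β] {key : (σ →₀ ℕ) → β}
  {lead : ι → σ →₀ ℕ} {b : ι → MvPolynomial σ K}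

theorem linearIndependent_of_triangular (hlead : Function.Injective lead)
    (hcoeff : ∀ i, coeff (lead i) (b i) ≠ 0)
    (hlt : ∀ i m, coeff m (b i) ≠ 0 → m ≠ lead i → key m < key (lead i)) :
    LinearIndependent K b := by
  classical
  rw [linearIndependent_iff']
  intro s g hsum i hi
  by_contra hgi
  obtain ⟨j, hj, hmax⟩ := (s.filter (g · ≠ 0)).exists_max_image (key ∘ lead)
    ⟨i, mem_filter.2 ⟨hi, hgi⟩⟩
  rw [mem_filter] at hj
  have hcoeff_sum : coeff (lead j) (∑ k ∈ s, g k • b k) = g j * coeff (lead j) (b j) := by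
    rw [coeff_sum, Finset.sum_eq_single j (fun k hk hkj => ?_) (absurd hj.1), coeff_smul, smul_eq_mul]
    rw [coeff_smul, smul_eq_mul, mul_eq_zero, or_iff_not_imp_left]
    exact fun hgk => not_not.1 fun hne =>
      (hmax k (mem_filter.2 ⟨hk, hgk⟩)).not_gt (hlt k _ hne (hlead.ne (Ne.symm hkj)))
  rw [hsum, coeff_zero] at hcoeff_sum
  exact mul_ne_zero hj.2 (hcoeff j) hcoeff_sum.symm

theorem span_eq_top_of_triangular (hwf : WellFounded (InvImage (· < ·) key))
    (hlead : Function.Surjective lead)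
    (hcoeff : ∀ i, coeff (lead i) (b i) ≠ 0)
    (hlt : ∀ i m, coeff m (b i) ≠ 0 → m ≠ lead i → key m < key (lead i)) :
    Submodule.span K (Set.range b) = ⊤ := by
  classical
  have hmonomial : ∀ m, monomial m (1 : K) ∈ Submodule.span K (Set.range b) := by
    intro m
    induction m using hwf.induction with
    | _ m ih =>
    obtain ⟨i, rfl⟩ := hlead m
    have hlower : ∀ m' ∈ (b i).support.erase (lead i),
        monomial m' (coeff m' (b i)) ∈ Submodule.span K (Set.range b) := by
      intro m' hm'
      rw [mem_erase, mem_support_iff] at hm'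
      rw [← mul_one (coeff m' (b i)), ← smul_eq_mul, ← smul_monomial]
      exact Submodule.smul_mem _ _ (ih m' (hlt i m' hm'.2 hm'.1))
    have hleading : monomial (lead i) (coeff (lead i) (b i)) =
        b i - ∑ m' ∈ (b i).support.erase (lead i), monomial m' (coeff m' (b i)) := by
      rw [eq_sub_iff_add_eq, add_sum_erase _ (fun m' => monomial m' (coeff m' (b i)))
        (mem_support_iff.2 (hcoeff i)), support_sum_monomial_coeff]
    have hnormalize : monomial (lead i) (1 : K) =
        (coeff (lead i) (b i))⁻¹ • monomial (lead i) (coeff (lead i) (b i)) := by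
      rw [smul_monomial, smul_eq_mul, inv_mul_cancel₀ (hcoeff i)]
    rw [hnormalize, hleading]
    exact Submodule.smul_mem _ _ (Submodule.sub_mem _ (Submodule.subset_span ⟨i, rfl⟩)
      (Submodule.sum_mem _ hlower))
  rw [eq_top_iff, ← (basisMonomials σ K).span_eq, Submodule.span_le]
  rintro _ ⟨m, rfl⟩
  rw [coe_basisMonomials]
  exact hmonomial m

end MvPolynomial

noncomputable section

namespace Delta0

/-- `x^{(k)}` has weight `k + 1`, which makes every weight class finite. -/
def weightRevLexKey (m : ℕ →₀ ℕ) : ℕ ×ₗ (Lex (ℕ →₀ ℕ))ᵒᵈ :=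
  toLex (weight (· + 1) m, OrderDual.toDual (toLex m))

theorem wellFounded_weightRevLexKey : WellFounded (InvImage (· < ·) weightRevLexKey) := by
  refine wellFounded_lt.onFun.prod_lex_of_wellFoundedOn_fiber fun W => ?_
  rw [← Set.wellFoundedOn_image]
  exact (((finite_weight_succ_le W).subset fun m hm => le_of_eq hm).image _).wellFoundedOn

theorem weightRevLexKey_lt_iff {m m' : ℕ →₀ ℕ} (hw : weight (· + 1) m = weight (· + 1) m') :
    weightRevLexKey m < weightRevLexKey m' ↔ toLex m' < toLex m := by
  simp [weightRevLexKey, Prod.Lex.toLex_lt_toLex, hw]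

variable (K : Type*) [Field K] {n : ℕ}

/-- `Δ₀(α)`, with `X l` standing for `x^{(l)}`. -/
def deltaMatrix (α : Fin n → ℕ) : Matrix (Fin n) (Fin n) (MvPolynomial ℕ K) :=
  fun i j => C ((α j).choose i : K) * X (α j - i)

def termExponent (α : Fin n → ℕ) (σ : Perm (Fin n)) : ℕ →₀ ℕ :=
  ∑ i, single (α i - σ i) 1

def termCoeff (α : Fin n → ℕ) (σ : Perm (Fin n)) : K :=
  Perm.sign σ * ∏ i, ((α i).choose (σ i) : K)

theorem det_deltaMatrix (α : Fin n → ℕ) :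
    (deltaMatrix K α).det = ∑ σ, monomial (termExponent α σ) (termCoeff K α σ) := by
  rw [Matrix.det_apply']
  refine sum_congr rfl fun σ _ => ?_
  simp only [deltaMatrix, X, C_mul_monomial, mul_one, termExponent, termCoeff]
  rw [← monomial_sum_prod, ← map_intCast (C (R := K) (σ := ℕ)), C_mul_monomial]

variable {K}

theorem le_of_termCoeff_ne_zero {α : Fin n → ℕ} {σ : Perm (Fin n)} (h : termCoeff K α σ ≠ 0)
    (i : Fin n) : (σ i : ℕ) ≤ α i := by
  by_contra! hlt
  exact h (by rw [termCoeff, prod_eq_zero (mem_univ i) (by rw [Nat.choose_eq_zero_of_lt hlt,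
    Nat.cast_zero]), mul_zero])

/- With `j` the first point moved by `σ` and `t = σ⁻¹ j > j`, composing with `swap j t` trades
the exponents `α j - σ j, α t - j` for `α j - j, α t - σ j`, all larger than `α j - σ j`. -/
theorem exists_termExponent_lt {α : Fin n → ℕ} (hα : StrictMono α) {σ : Perm (Fin n)}
    (hσ : ∀ i, (σ i : ℕ) ≤ α i) (hσ1 : σ ≠ 1) :
    ∃ τ : Perm (Fin n), (∀ i, (τ i : ℕ) ≤ α i) ∧
      toLex (termExponent α τ) < toLex (termExponent α σ) := by
  classical
  obtain ⟨j, hj, hjmin⟩ := (univ.filter fun i => σ i ≠ i).exists_min_image id <| by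
    obtain ⟨i, hi⟩ := not_forall.1 (mt Perm.ext hσ1)
    exact ⟨i, by simpa using hi⟩
  simp only [mem_filter, mem_univ, true_and, id] at hj hjmin
  have hfix : ∀ i, i < j → σ i = i := fun i hi => by_contra fun h => (hjmin i h).not_gt hi
  have hjσ : j < σ j :=
    lt_of_le_of_ne (not_lt.1 fun h => hj (σ.injective (hfix _ h))) (Ne.symm hj)
  set t := σ.symm j
  have hσt : σ t = j := σ.apply_symm_apply j
  have hjt : j < t := by
    refine lt_of_le_of_ne (not_lt.1 fun h => ?_) fun h => hj (h ▸ hσt)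
    exact h.ne (hσt ▸ (hfix t h).symm)
  set τ := σ * swap j t
  have hτj : τ j = j := by simp [τ, hσt]
  have hτt : τ t = σ j := by simp [τ]
  have hτ : ∀ i ∉ ({j, t} : Finset (Fin n)), τ i = σ i := fun i hi => by
    simp only [mem_insert, mem_singleton, not_or] at hi
    simp [τ, swap_apply_of_ne_of_ne hi.1 hi.2]
  have hαjt := hα hjt
  have hσj := hσ j
  refine ⟨τ, fun i => ?_, ?_⟩
  · by_cases hi : i ∈ ({j, t} : Finset (Fin n))
    · rcases mem_insert.1 hi with rfl | hi
      · rw [hτj]; exact Fin.val_le_of_strictMono hα i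
      · rw [mem_singleton.1 hi, hτt]; omega
    · rw [hτ i hi]; exact hσ i
  · have hsplit : ∀ π : Perm (Fin n), termExponent α π =
        (single (α j - π j) 1 + single (α t - π t) 1) + ∑ i ∈ {j, t}ᶜ, single (α i - π i) 1 :=
      fun π => by rw [termExponent, ← sum_add_sum_compl {j, t}, sum_pair hjt.ne]
    rw [hsplit τ, hsplit σ, hτj, hτt, sum_congr rfl fun i hi => by rw [hτ i (mem_compl.1 hi)],
      toLex_add, toLex_add]
    refine add_lt_add_left (toLex_single_add_single_lt ?_ ?_ ?_) _ <;> omega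

theorem termExponent_one_lt {α : Fin n → ℕ} (hα : StrictMono α) {σ : Perm (Fin n)}
    (hσ : ∀ i, (σ i : ℕ) ≤ α i) (hσ1 : σ ≠ 1) :
    toLex (termExponent α 1) < toLex (termExponent α σ) := by
  classical
  obtain ⟨ρ, hρ, hmin⟩ := (univ.filter fun ρ : Perm (Fin n) =>
    (∀ i, (ρ i : ℕ) ≤ α i) ∧ ρ ≠ 1).exists_min_image (fun ρ => toLex (termExponent α ρ))
    ⟨σ, by simp [hσ, hσ1]⟩
  simp only [mem_filter, mem_univ, true_and] at hρ hmin
  obtain ⟨τ, hτ, hlt⟩ := exists_termExponent_lt hα hρ.1 hρ.2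
  obtain rfl : τ = 1 := by_contra fun h => (hmin τ ⟨hτ, h⟩).not_gt hlt
  exact hlt.trans_le (hmin σ ⟨hσ, hσ1⟩)

theorem weight_termExponent_eq {α : Fin n → ℕ} {σ τ : Perm (Fin n)}
    (hσ : ∀ i, (σ i : ℕ) ≤ α i) (hτ : ∀ i, (τ i : ℕ) ≤ α i) :
    weight (· + 1) (termExponent α σ) = weight (· + 1) (termExponent α τ) := by
  have key : ∀ π : Perm (Fin n), (∀ i, (π i : ℕ) ≤ α i) →
      weight (· + 1) (termExponent α π) + ∑ i : Fin n, (i : ℕ) = ∑ i, (α i + 1) := by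
    intro π hπ
    rw [← Equiv.sum_comp π (fun i => (i : ℕ)), termExponent, map_sum, ← sum_add_distrib]
    refine sum_congr rfl fun i _ => ?_
    have := hπ i
    simp only [weight_single, smul_eq_mul, one_mul]
    omega
  have := key σ hσ
  have := key τ hτ
  omega

theorem coeff_det_deltaMatrix (α : Fin n → ℕ) (m : ℕ →₀ ℕ) :
    coeff m (deltaMatrix K α).det = ∑ σ with termExponent α σ = m, termCoeff K α σ := by
  classical
  simp only [det_deltaMatrix, coeff_sum, coeff_monomial, sum_filter]

theorem coeff_termExponent_one_det_deltaMatrix [CharZero K] {α : Fin n → ℕ}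
    (hα : StrictMono α) : coeff (termExponent α 1) (deltaMatrix K α).det ≠ 0 := by
  classical
  rw [coeff_det_deltaMatrix, sum_filter,
    Finset.sum_eq_single 1 (fun σ _ hσ1 => ?_) (by simp), if_pos rfl]
  · simp only [termCoeff, Perm.sign_one, Units.val_one, Int.cast_one, one_mul, Perm.one_apply]
    exact prod_ne_zero_iff.2 fun i _ =>
      Nat.cast_ne_zero.2 (Nat.choose_pos (Fin.val_le_of_strictMono hα i)).ne'
  · refine ite_eq_right_iff.2 fun h => by_contra fun hc => ?_
    exact (termExponent_one_lt hα (le_of_termCoeff_ne_zero hc) hσ1).ne (congrArg toLex h.symm)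

theorem weightRevLexKey_lt_of_coeff_det_deltaMatrix_ne_zero {α : Fin n → ℕ} (hα : StrictMono α)
    {m : ℕ →₀ ℕ} (hm : coeff m (deltaMatrix K α).det ≠ 0) (hne : m ≠ termExponent α 1) :
    weightRevLexKey m < weightRevLexKey (termExponent α 1) := by
  rw [coeff_det_deltaMatrix] at hm
  obtain ⟨σ, hσm, hσ⟩ := exists_ne_zero_of_sum_ne_zero hm
  obtain rfl := (mem_filter.1 hσm).2
  have hσα := le_of_termCoeff_ne_zero hσ
  rw [weightRevLexKey_lt_iff (weight_termExponent_eq hσα (Fin.val_le_of_strictMono hα))]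
  exact termExponent_one_lt hα hσα (by rintro rfl; exact hne rfl)

theorem termExponent_one_eq (α : Fin n → ℕ) :
    termExponent α 1 = Multiset.toFinsupp ↑(List.ofFn fun i => α i - i) := by
  simp only [termExponent, Perm.one_apply, ← Multiset.toFinsupp_singleton, ← map_sum]
  rw [← Fin.univ_val_map, ← Multiset.sum_map_singleton (Multiset.map _ univ.val), Multiset.map_map]
  rfl

theorem termExponent_one_injective :
    Function.Injective fun a : {s : Σ n : ℕ, Fin n → ℕ // StrictMono s.2} =>
      termExponent a.1.2 1 := by
  rintro ⟨⟨n, α⟩, hα⟩ ⟨⟨n', α'⟩, hα'⟩ h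
  dsimp only at hα hα' h
  rw [termExponent_one_eq, termExponent_one_eq] at h
  have hl := (Multiset.coe_eq_coe.1 (Multiset.toFinsupp.injective h)).eq_of_sortedLE
    (List.sortedLE_ofFn_iff.2 (Fin.monotone_sub_val_of_strictMono hα))
    (List.sortedLE_ofFn_iff.2 (Fin.monotone_sub_val_of_strictMono hα'))
  obtain rfl : n = n' := by simpa using congrArg List.length hl
  obtain rfl : α = α' := funext fun i => by
    have := congrFun (List.ofFn_inj.1 hl) i
    have := Fin.val_le_of_strictMono hα i
    have := Fin.val_le_of_strictMono hα' i
    omega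
  rfl

theorem termExponent_one_surjective :
    Function.Surjective fun a : {s : Σ n : ℕ, Fin n → ℕ // StrictMono s.2} =>
      termExponent a.1.2 1 := by
  intro m
  set l := (toMultiset m).sort (· ≤ ·)
  have hl : l.SortedLE := List.sortedLE_iff_pairwise.2 (Multiset.pairwise_sort _ _)
  refine ⟨⟨⟨l.length, fun i => l.get i + i⟩, fun i j hij => ?_⟩, ?_⟩
  · have := hl.monotone_get hij.le
    have : (i : ℕ) < j := hij
    dsimp only
    omega
  · simp only [termExponent_one_eq, List.get_eq_getElem, add_tsub_cancel_right,
      List.ofFn_getElem, l, Multiset.sort_eq, toMultiset_toFinsupp]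

end Delta0

end

/-- the family { det Δ_0(α) }, indexed by strictly increasing finite
sequences α of naturals, is a basis of E = ℂ[x, x', x'', ...] (formalized as the
multivariate polynomial ring with variables `X l` = x^{(l)}). -/
theorem stmt_6 :
    let f : {s : Σ n : ℕ, Fin n → ℕ // StrictMono s.2} → MvPolynomial ℕ ℂ :=
      fun α => Matrix.det (fun i j : Fin α.1.1 =>
        MvPolynomial.C ((α.1.2 j).choose (i : ℕ) : ℂ)
          * MvPolynomial.X (α.1.2 j - (i : ℕ)))
    LinearIndependent ℂ f ∧ Submodule.span ℂ (Set.range f) = ⊤ := by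
  intro f
  have hcoeff : ∀ a, coeff (Delta0.termExponent a.1.2 1) (f a) ≠ 0 := fun a =>
    Delta0.coeff_termExponent_one_det_deltaMatrix a.2
  have hlower : ∀ a m, coeff m (f a) ≠ 0 → m ≠ Delta0.termExponent a.1.2 1 →
      Delta0.weightRevLexKey m < Delta0.weightRevLexKey (Delta0.termExponent a.1.2 1) :=
    fun a _ => Delta0.weightRevLexKey_lt_of_coeff_det_deltaMatrix_ne_zero a.2
  exact ⟨linearIndependent_of_triangular Delta0.termExponent_one_injective hcoeff hlower,
    span_eq_top_of_triangular Delta0.wellFounded_weightRevLexKey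
      Delta0.termExponent_one_surjective hcoeff hlower⟩
end

section
/- For every natural number p, the determinants det Δ_0(α), as α ranges over strictly increasing sequences with weight w(α) = Σ (α_i - i + 2) = p, form a basis of the subspace E_p ⊂ ℂ[x, x', x'', ...] spanned by the monomials of weight p. -/
/-!
Expanding `det Δ₀(α)` over permutations, the `σ`-term is a multiple of `∏ⱼ x^{(αⱼ - σⱼ)}`,
which vanishes unless `σⱼ ≤ αⱼ` for all `j`. The identity contributes a nonzero multiple of
`x^λ` with `λⱼ = αⱼ - j`, and `α ↦ λ` is a bijection from strictly increasing sequences of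
weight `p` onto the partitions of `p`, i.e. onto the monomials of `E_p`. For `σ ≠ 1` the strict
rearrangement inequality gives `∑ⱼ (αⱼ - σⱼ)² > ∑ⱼ (αⱼ - j)²`, so ordering monomials by the sum
of the squares of their parts, each `det Δ₀(α)` is `c • x^λ` plus strictly larger monomials of
weight `p`. The change of basis from the monomials of `E_p` is therefore triangular.
-/

open MvPolynomial Finset Equiv

namespace DeltaDet

section LowestMonomial

variable {τ K ι : Type*} [Field K] (ν : (τ →₀ ℕ) → ℕ)

def IsStrictMinMonomial (q : MvPolynomial τ K) (m : τ →₀ ℕ) : Prop :=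
  m ∈ q.support ∧ ∀ m' ∈ q.support, m' ≠ m → ν m < ν m'

variable {ν}

theorem linearIndependent_of_isStrictMinMonomial {f : ι → MvPolynomial τ K}
    {lead : ι → τ →₀ ℕ} (hlead : Function.Injective lead)
    (hf : ∀ i, IsStrictMinMonomial ν (f i) (lead i)) : LinearIndependent K f := by
  classical
  rw [linearIndependent_iff]
  intro l hl
  by_contra hne
  obtain ⟨i₀, hi₀, hmin⟩ :=
    l.support.exists_min_image (ν ∘ lead) (Finsupp.support_nonempty_iff.2 hne)
  have hvanish : ∀ i ∈ l.support, i ≠ i₀ → l i • coeff (lead i₀) (f i) = 0 := by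
    intro i hi hi₀'
    by_contra h
    have hlt := (hf i).2 _ (mem_support_iff.2 (right_ne_zero_of_smul h)) (hlead.ne hi₀'.symm)
    exact (hmin i hi).not_gt hlt
  have hcoeff := congrArg (coeff (lead i₀)) hl
  rw [Finsupp.linearCombination_apply, Finsupp.sum, coeff_sum, coeff_zero] at hcoeff
  simp only [coeff_smul] at hcoeff
  rw [Finset.sum_eq_single_of_mem i₀ hi₀ hvanish, smul_eq_mul] at hcoeff
  exact mul_ne_zero (Finsupp.mem_support_iff.1 hi₀) (mem_support_iff.1 (hf i₀).1) hcoeff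

theorem span_range_eq_restrictSupport {f : ι → MvPolynomial τ K} {S : Set (τ →₀ ℕ)}
    (hS : BddAbove (ν '' S)) (hfS : ∀ i, f i ∈ restrictSupport K S)
    (hmin : ∀ m ∈ S, ∃ i, IsStrictMinMonomial ν (f i) m) :
    Submodule.span K (Set.range f) = restrictSupport K S := by
  classical
  refine le_antisymm (Submodule.span_le.2 (Set.range_subset_iff.2 hfS)) ?_
  rw [restrictSupport_eq_span, Submodule.span_le, Set.image_subset_iff]
  obtain ⟨N, hN⟩ := hS
  intro m hm
  induction h : N - ν m using Nat.strong_induction_on generalizing m with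
  | _ k ih =>
    obtain ⟨i, hm_mem, hhigher⟩ := hmin m hm
    have hexp : coeff m (f i) • monomial m 1 + ∑ m' ∈ (f i).support.erase m,
        coeff m' (f i) • monomial m' (1 : K) = f i := by
      conv_rhs => rw [as_sum (f i), ← Finset.add_sum_erase _ _ hm_mem]
      simp only [smul_monomial, smul_eq_mul, mul_one]
    have hsplit : monomial m 1 = (coeff m (f i))⁻¹ • (f i - ∑ m' ∈ (f i).support.erase m,
        coeff m' (f i) • monomial m' (1 : K)) := by
      rw [eq_inv_smul_iff₀ (mem_support_iff.1 hm_mem)]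
      exact eq_sub_of_add_eq hexp
    rw [Set.mem_preimage, SetLike.mem_coe, hsplit]
    refine Submodule.smul_mem _ _ (Submodule.sub_mem _ (Submodule.subset_span ⟨i, rfl⟩)
      (Submodule.sum_mem _ fun m' hm' => Submodule.smul_mem _ _ ?_))
    obtain ⟨hm'm, hm'⟩ := Finset.mem_erase.1 hm'
    have hm'S : m' ∈ S := hfS i hm'
    have hlt := hhigher m' hm' hm'm
    have hle := hN ⟨m', hm'S, rfl⟩
    exact ih (N - ν m') (by omega) hm'S rfl

end LowestMonomial

def weight (m : ℕ →₀ ℕ) : ℕ := m.sum fun a e => (a + 1) * e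

def sqWeight (m : ℕ →₀ ℕ) : ℕ := m.sum fun a e => e * a ^ 2

noncomputable def prodExp {n : ℕ} (a : Fin n → ℕ) : ℕ →₀ ℕ := ∑ j, Finsupp.single (a j) 1

theorem sqWeight_le_weight_sq (m : ℕ →₀ ℕ) : sqWeight m ≤ weight m ^ 2 := by
  unfold sqWeight weight Finsupp.sum
  refine le_trans (Finset.sum_le_sum fun a _ => ?_)
    (sum_sq_le_sq_sum_of_nonneg fun _ _ => Nat.zero_le _)
  calc m a * a ^ 2 ≤ m a ^ 2 * (a + 1) ^ 2 :=
        Nat.mul_le_mul (Nat.le_self_pow two_ne_zero _) (Nat.pow_le_pow_left a.le_succ 2)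
    _ = ((a + 1) * m a) ^ 2 := by ring

theorem sum_prodExp {M : Type*} [AddCommMonoid M] {h : ℕ → ℕ → M} (h_zero : ∀ a, h a 0 = 0)
    (h_add : ∀ a e₁ e₂, h a (e₁ + e₂) = h a e₁ + h a e₂) {n : ℕ} (a : Fin n → ℕ) :
    (prodExp a).sum h = ∑ j, h (a j) 1 := by
  rw [prodExp, ← Finsupp.sum_finsetSum_index h_zero h_add]
  exact Finset.sum_congr rfl fun j _ => Finsupp.sum_single_index (h_zero _)

theorem weight_prodExp {n : ℕ} (a : Fin n → ℕ) : weight (prodExp a) = ∑ j, (a j + 1) := by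
  rw [weight, sum_prodExp (fun _ => mul_zero _) (fun _ _ _ => mul_add _ _ _)]
  simp

theorem sqWeight_prodExp {n : ℕ} (a : Fin n → ℕ) : sqWeight (prodExp a) = ∑ j, a j ^ 2 := by
  rw [sqWeight, sum_prodExp (h := fun a e => e * a ^ 2) (fun _ => zero_mul _)
    (fun _ _ _ => add_mul _ _ _)]
  simp

theorem toMultiset_prodExp {n : ℕ} (a : Fin n → ℕ) :
    Finsupp.toMultiset (prodExp a) = ↑(List.ofFn a) := by
  simp only [prodExp, map_sum, Finsupp.toMultiset_single, one_nsmul]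
  rw [← Fin.univ_val_map, ← Multiset.sum_map_singleton (univ.val.map a), Multiset.map_map]
  rfl

section StrictMono

variable {n : ℕ} {α : Fin n → ℕ}

theorem val_le_of_strictMono (hα : StrictMono α) (j : Fin n) : (j : ℕ) ≤ α j := by
  have hcard := Finset.card_le_card_of_injOn α (s := Iic j) (t := Iic (α j))
    (fun k hk => Finset.mem_Iic.2 (hα.monotone (Finset.mem_Iic.1 hk))) hα.injective.injOn
  simpa using hcard

theorem monotone_sub_val_of_strictMono (hα : StrictMono α) :
    Monotone fun j : Fin n => α j - j := by
  intro i j hij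
  have hcard := Finset.card_le_card_of_injOn α (s := Icc i j) (t := Icc (α i) (α j))
    (fun k hk => by
      obtain ⟨hik, hkj⟩ := Finset.mem_Icc.1 hk
      exact Finset.mem_Icc.2 ⟨hα.monotone hik, hα.monotone hkj⟩)
    hα.injective.injOn
  simp only [Fin.card_Icc, Nat.card_Icc] at hcard
  have := val_le_of_strictMono hα j
  have : (i : ℕ) ≤ j := hij
  show α i - i ≤ α j - j
  omega

theorem sum_sq_sub_val_lt (hα : StrictMono α) {σ : Perm (Fin n)} (hσ : σ ≠ 1)
    (hσα : ∀ j, (σ j : ℕ) ≤ α j) :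
    ∑ j, (α j - j) ^ 2 < ∑ j, (α j - σ j) ^ 2 := by
  have hrearr : ∑ j, (α j : ℤ) * (σ j : ℕ) < ∑ j, (α j : ℤ) * (j : ℕ) := by
    have hmono : Monovary (fun j => (α j : ℤ)) (fun j : Fin n => ((j : ℕ) : ℤ)) :=
      fun i j hij => by
        dsimp only at hij ⊢
        exact_mod_cast hα.monotone (Fin.lt_def.2 (by exact_mod_cast hij)).le
    refine hmono.sum_mul_comp_perm_lt_sum_mul_iff.2 fun hσmono => hσ ?_
    have hσ_strictMono : StrictMono σ := fun i j hij => by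
      by_contra hle
      have hlt : σ j < σ i := lt_of_le_of_ne (not_lt.1 hle) (σ.injective.ne hij.ne')
      have := hσmono (i := j) (j := i) (by simp only [Function.comp]; exact_mod_cast hlt)
      exact (hα hij).not_ge (by exact_mod_cast (show (α j : ℤ) ≤ α i from this))
    exact Equiv.ext (congrFun hσ_strictMono.eq_id)
  have hsq : ∑ j, ((σ j : ℕ) : ℤ) ^ 2 = ∑ j : Fin n, ((j : ℕ) : ℤ) ^ 2 :=
    Equiv.sum_comp σ fun j => ((j : ℕ) : ℤ) ^ 2
  zify [hσα, val_le_of_strictMono hα]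
  simp only [sub_sq, Finset.sum_add_distrib, Finset.sum_sub_distrib, mul_assoc, ← Finset.mul_sum]
  linarith

end StrictMono

theorem sigma_eq_of_prodExp_sub_val_eq {n n' : ℕ} {α : Fin n → ℕ} {β : Fin n' → ℕ}
    (hα : StrictMono α) (hβ : StrictMono β)
    (h : prodExp (fun j => α j - j) = prodExp (fun j => β j - j)) :
    (⟨n, α⟩ : Σ k, Fin k → ℕ) = ⟨n', β⟩ := by
  have hperm := Multiset.coe_eq_coe.1 <| by
    simpa only [toMultiset_prodExp] using congrArg Finsupp.toMultiset h
  have hlist := hperm.eq_of_sortedLE (monotone_sub_val_of_strictMono hα).sortedLE_ofFn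
    (monotone_sub_val_of_strictMono hβ).sortedLE_ofFn
  obtain ⟨rfl, hfun⟩ := Sigma.mk.inj_iff.1 (List.ofFn_inj'.1 hlist)
  congr 1
  funext j
  have := congrFun (eq_of_heq hfun) j
  have := val_le_of_strictMono hα j
  have := val_le_of_strictMono hβ j
  omega

theorem exists_strictMono_prodExp_sub_val_eq (m : ℕ →₀ ℕ) :
    ∃ (n : ℕ) (α : Fin n → ℕ), StrictMono α ∧ prodExp (fun j => α j - j) = m := by
  set l := (Finsupp.toMultiset m).sort (· ≤ ·)
  have hl : l.SortedLE := (Multiset.pairwise_sort _ _).sortedLE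
  refine ⟨l.length, fun j => l.get j + j, fun i j hij => ?_, ?_⟩
  · have := hl.monotone_get hij.le
    dsimp only
    omega
  · simp only [Nat.add_sub_cancel]
    rw [← Finsupp.toMultiset_toFinsupp m, ← Finsupp.toMultiset_eq_iff, toMultiset_prodExp,
      List.ofFn_get, Multiset.sort_eq]

section Determinant

variable (K : Type*) [Field K] {n : ℕ}

/-- `Δ₀(α)` with rows indexed from `0`; the truncated subtraction `αⱼ - i` is harmless since
the binomial coefficient vanishes when `i > αⱼ`. -/
noncomputable def delta (α : Fin n → ℕ) : Matrix (Fin n) (Fin n) (MvPolynomial ℕ K) :=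
  fun i j => C ((α j).choose i : K) * X (α j - i)

def detCoeff (α : Fin n → ℕ) (σ : Perm (Fin n)) : K :=
  (Perm.sign σ : ℤ) * ∏ j, ((α j).choose (σ j) : K)

theorem det_delta (α : Fin n → ℕ) :
    (delta K α).det =
      ∑ σ : Perm (Fin n), monomial (prodExp fun j => α j - σ j) (detCoeff K α σ) := by
  refine (Matrix.det_apply _).trans (Finset.sum_congr rfl fun σ _ => ?_)
  simp only [delta, Finset.prod_mul_distrib, ← map_prod]
  rw [show ∏ i, (X (α i - σ i) : MvPolynomial ℕ K) =
      ∏ i, monomial (Finsupp.single (α i - σ i) 1) 1 from rfl,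
    ← monomial_sum_index, Units.smul_def, smul_monomial, zsmul_eq_mul]
  rfl

theorem coeff_det_delta (α : Fin n → ℕ) (m : ℕ →₀ ℕ) :
    coeff m (delta K α).det =
      ∑ σ : Perm (Fin n), if prodExp (fun j => α j - σ j) = m then detCoeff K α σ else 0 := by
  simp only [det_delta, coeff_sum, coeff_monomial]

variable {K}

theorem exists_perm_of_mem_support_det {α : Fin n → ℕ} {m : ℕ →₀ ℕ}
    (hm : m ∈ (delta K α).det.support) :
    ∃ σ : Perm (Fin n), detCoeff K α σ ≠ 0 ∧ prodExp (fun j => α j - σ j) = m := by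
  rw [mem_support_iff, coeff_det_delta] at hm
  obtain ⟨σ, -, hσ⟩ := Finset.exists_ne_zero_of_sum_ne_zero hm
  exact ⟨σ, fun h => hσ (by simp [h]), by by_contra h; simp [h] at hσ⟩

theorem le_of_detCoeff_ne_zero {α : Fin n → ℕ} {σ : Perm (Fin n)} (h : detCoeff K α σ ≠ 0)
    (j : Fin n) : (σ j : ℕ) ≤ α j := by
  by_contra hlt
  refine h (mul_eq_zero_of_right _ (Finset.prod_eq_zero (Finset.mem_univ j) ?_))
  rw [Nat.choose_eq_zero_of_lt (not_le.1 hlt), Nat.cast_zero]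

theorem sqWeight_lt_of_detCoeff_ne_zero {α : Fin n → ℕ} (hα : StrictMono α) {σ : Perm (Fin n)}
    (hσ : σ ≠ 1) (hc : detCoeff K α σ ≠ 0) :
    sqWeight (prodExp fun j => α j - j) < sqWeight (prodExp fun j => α j - σ j) := by
  rw [sqWeight_prodExp, sqWeight_prodExp]
  exact sum_sq_sub_val_lt hα hσ (le_of_detCoeff_ne_zero hc)

theorem weight_of_mem_support_det {α : Fin n → ℕ} (hα : StrictMono α) {m : ℕ →₀ ℕ}
    (hm : m ∈ (delta K α).det.support) : weight m = ∑ j, (α j - j + 1) := by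
  obtain ⟨σ, hc, rfl⟩ := exists_perm_of_mem_support_det hm
  have hσα := le_of_detCoeff_ne_zero hc
  have hsum : ∑ j, ((σ j : ℕ) : ℤ) = ∑ j : Fin n, ((j : ℕ) : ℤ) :=
    Equiv.sum_comp σ fun j => ((j : ℕ) : ℤ)
  rw [weight_prodExp]
  zify [hσα, val_le_of_strictMono hα]
  simp only [Finset.sum_add_distrib, Finset.sum_sub_distrib, hsum]

variable [CharZero K]

theorem detCoeff_one_ne_zero {α : Fin n → ℕ} (hα : StrictMono α) : detCoeff K α 1 ≠ 0 := by
  simp only [detCoeff, Perm.sign_one, Units.val_one, Int.cast_one, one_mul, Perm.coe_one, id]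
  exact Finset.prod_ne_zero_iff.2 fun j _ =>
    Nat.cast_ne_zero.2 (Nat.choose_pos (val_le_of_strictMono hα j)).ne'

theorem isStrictMinMonomial_det {α : Fin n → ℕ} (hα : StrictMono α) :
    IsStrictMinMonomial sqWeight (delta K α).det (prodExp fun j => α j - j) := by
  refine ⟨?_, fun m hm hne => ?_⟩
  · rw [mem_support_iff, coeff_det_delta, Finset.sum_eq_single 1]
    · simpa using detCoeff_one_ne_zero hα
    · intro σ _ hσ
      by_cases hc : detCoeff K α σ = 0
      · simp [hc]
      · exact if_neg fun heq =>
          (sqWeight_lt_of_detCoeff_ne_zero hα hσ hc).ne (congrArg sqWeight heq).symm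
    · simp
  · obtain ⟨σ, hc, rfl⟩ := exists_perm_of_mem_support_det hm
    refine sqWeight_lt_of_detCoeff_ne_zero hα (fun h => hne ?_) hc
    simp [h]

end Determinant

end DeltaDet

open DeltaDet in
/-- for each p, the determinants det Δ_0(α), over strictly increasing
sequences α of weight w(α) = p, form a basis of the span E_p of monomials of
weight p (the variable x^{(a)} = `X a` having weight a + 1). -/
theorem stmt_7 (p : ℕ) :
    let Ep : Submodule ℂ (MvPolynomial ℕ ℂ) :=
      Submodule.span ℂ
        {q | ∃ m : ℕ →₀ ℕ, (m.sum fun a e => (a + 1) * e) = p ∧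
          q = MvPolynomial.monomial m 1}
    let f : {s : Σ n : ℕ, Fin n → ℕ //
        StrictMono s.2 ∧ (∑ i, (s.2 i - (i : ℕ) + 1)) = p} → MvPolynomial ℕ ℂ :=
      fun α => Matrix.det (fun i j : Fin α.1.1 =>
        MvPolynomial.C ((α.1.2 j).choose (i : ℕ) : ℂ)
          * MvPolynomial.X (α.1.2 j - (i : ℕ)))
    LinearIndependent ℂ f ∧ Submodule.span ℂ (Set.range f) = Ep := by
  intro Ep f
  have hmin : ∀ β, IsStrictMinMonomial sqWeight (f β) (prodExp fun j => β.1.2 j - j) :=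
    fun β => isStrictMinMonomial_det β.2.1
  have hEp : Ep = restrictSupport ℂ {m | weight m = p} := by
    rw [restrictSupport_eq_span]
    refine congrArg (Submodule.span ℂ) (Set.ext fun q => ?_)
    exact ⟨fun ⟨m, hm, hq⟩ => ⟨m, hm, hq.symm⟩, fun ⟨m, hm, hq⟩ => ⟨m, hm, hq.symm⟩⟩
  refine ⟨linearIndependent_of_isStrictMinMonomial (fun β γ h =>
      Subtype.ext (sigma_eq_of_prodExp_sub_val_eq β.2.1 γ.2.1 h)) hmin, ?_⟩
  rw [hEp]
  refine span_range_eq_restrictSupport (ν := sqWeight) ⟨p ^ 2, ?_⟩ (fun β m hm => ?_)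
    (fun m hm => ?_)
  · rintro _ ⟨m, hm, rfl⟩
    exact (sqWeight_le_weight_sq m).trans_eq (congrArg (· ^ 2) hm)
  · exact (weight_of_mem_support_det β.2.1 hm).trans β.2.2
  · obtain ⟨n, α, hα, rfl⟩ := exists_strictMono_prodExp_sub_val_eq m
    exact ⟨⟨⟨n, α⟩, hα, (weight_prodExp _).symm.trans hm⟩, isStrictMinMonomial_det hα⟩
end

section
/- Let N ≥ 1 and d ≥ 1. The number of N-tuples of strictly increasing sequences (α^1, α^2, ..., α^N), with α^j of length n_j ≥ 0, satisfying s_{j+1} ≤ α^j_1 < α^j_2 < ... < α^j_{n_j} ≤ d - 1 for each j (where s_{j+1} = n_N + n_{N-1} + ... + n_{j+1}, and s_{N+1} = 0), equals (N+1)^d. -/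
/-! Removing the last sequence `α^N`, of length `k`, and shifting all other entries down by `k`
leaves an admissible tuple of `N - 1` sequences bounded by `d - k`; `α^N` itself is an arbitrary
`k`-subset of `{0, …, d-1}`, and the process is reversible. Hence the count `c N d` satisfies
`c (N+1) d = ∑_{S ⊆ Fin d} c N (d - #S)`, and with `c N d = (N+1)^d` the right-hand side is the
binomial expansion of `(1 + (N+1))^d`. -/

open Finset

abbrev FinSeq : Type := Σ n : ℕ, Fin n → ℕ

namespace FinSeq

def map (g : ℕ → ℕ) (x : FinSeq) : FinSeq := ⟨x.1, g ∘ x.2⟩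

lemma map_map (g h : ℕ → ℕ) (x : FinSeq) : map g (map h x) = map (g ∘ h) x := rfl

lemma map_eq_self {g : ℕ → ℕ} {x : FinSeq} (h : ∀ i, g (x.2 i) = x.2 i) : map g x = x := by
  obtain ⟨n, f⟩ := x
  exact congrArg (Sigma.mk n) (funext h)

@[simp] lemma map_fst (g : ℕ → ℕ) (x : FinSeq) : (map g x).1 = x.1 := rfl

def IsIncIco (a b : ℕ) (x : FinSeq) : Prop := StrictMono x.2 ∧ ∀ i, a ≤ x.2 i ∧ x.2 i < b

lemma isIncIco_map_add_iff (a b k : ℕ) (x : FinSeq) :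
    (map (· + k) x).IsIncIco (a + k) b ↔ x.IsIncIco a (b - k) := by
  refine and_congr (forall₂_congr fun _ _ => imp_congr_right fun _ => Nat.add_lt_add_iff_right)
    (forall_congr' fun _ => and_congr Nat.add_le_add_iff_right Nat.lt_sub_iff_add_lt.symm)

end FinSeq

def IncSeq (d : ℕ) : Type := {x : FinSeq // x.IsIncIco 0 d}

def strictMonoLtEquivOrderEmbedding (n d : ℕ) :
    {f : Fin n → ℕ // StrictMono f ∧ ∀ i, f i < d} ≃ (Fin n ↪o Fin d) where
  toFun f := OrderEmbedding.ofStrictMono (fun i => ⟨f.1 i, f.2.2 i⟩) fun _ _ h => f.2.1 h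
  invFun g := ⟨fun i => g i, fun _ _ h => g.strictMono h, fun i => (g i).isLt⟩
  left_inv _ := rfl
  right_inv _ := rfl

def incSeqEquivFinset (d : ℕ) : IncSeq d ≃ Finset (Fin d) :=
  calc IncSeq d ≃ Σ n, {f : Fin n → ℕ // StrictMono f ∧ ∀ i, f i < d} :=
        { toFun x := ⟨x.1.1, x.1.2, x.2.1, fun i => (x.2.2 i).2⟩
          invFun y := ⟨⟨y.1, y.2.1⟩, y.2.2.1, fun i => ⟨Nat.zero_le _, y.2.2.2 i⟩⟩ }
    _ ≃ Σ n, Set.powersetCard (Fin d) n :=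
        Equiv.sigmaCongrRight fun n =>
          (strictMonoLtEquivOrderEmbedding n d).trans Set.powersetCard.ofFinEmbEquiv
    _ ≃ Finset (Fin d) := Set.powersetCard.prodEquiv

lemma card_incSeqEquivFinset {d : ℕ} (x : IncSeq d) : #(incSeqEquivFinset d x) = x.1.1 :=
  (Set.powersetCard.ofFinEmbEquiv _).prop

noncomputable instance (d : ℕ) : Fintype (IncSeq d) := Fintype.ofEquiv _ (incSeqEquivFinset d).symm

section
variable {N : ℕ}

-- `suffixSum (fun t => (α t).1) j` is the paper's `s_{j+1}`.
def suffixSum (ℓ : Fin N → ℕ) (j : Fin N) : ℕ := ∑ t ∈ univ.filter (fun t => j < t), ℓ t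

lemma suffixSum_last (ℓ : Fin (N + 1) → ℕ) : suffixSum ℓ (Fin.last N) = 0 :=
  sum_eq_zero fun t ht => absurd (mem_filter.1 ht).2 (Fin.le_last t).not_gt

lemma suffixSum_castSucc (ℓ : Fin (N + 1) → ℕ) (j : Fin N) :
    suffixSum ℓ j.castSucc = suffixSum (fun t => ℓ t.castSucc) j + ℓ (Fin.last N) := by
  simp only [suffixSum, sum_filter, Fin.sum_univ_castSucc, Fin.castSucc_lt_castSucc_iff,
    Fin.castSucc_lt_last, if_true]

def IsAdmissible (d : ℕ) (α : Fin N → FinSeq) : Prop :=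
  ∀ j, (α j).IsIncIco (suffixSum (fun t => (α t).1) j) d

theorem isAdmissible_snoc_iff {d : ℕ} (x : FinSeq) (β : Fin N → FinSeq) :
    IsAdmissible d (Fin.snoc (fun j => FinSeq.map (· + x.1) (β j)) x : Fin (N + 1) → FinSeq) ↔
      x.IsIncIco 0 d ∧ IsAdmissible (d - x.1) β := by
  simp only [IsAdmissible, Fin.forall_fin_succ' (n := N), Fin.snoc_castSucc, Fin.snoc_last,
    suffixSum_castSucc, suffixSum_last, FinSeq.isIncIco_map_add_iff, FinSeq.map_fst]
  exact and_comm

lemma IsAdmissible.snoc_unshift {d : ℕ} {α : Fin (N + 1) → FinSeq} (h : IsAdmissible d α) :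
    Fin.snoc (fun j => FinSeq.map (· + (α (Fin.last N)).1)
      (FinSeq.map (· - (α (Fin.last N)).1) (α j.castSucc))) (α (Fin.last N)) = α := by
  conv_rhs => rw [← Fin.snoc_init_self α]
  congr 1
  funext j
  rw [FinSeq.map_map]
  refine FinSeq.map_eq_self fun i => Nat.sub_add_cancel ?_
  have := (h j.castSucc).2 i
  rw [suffixSum_castSucc] at this
  omega

def admissibleSnocEquiv (N d : ℕ) :
    {α : Fin (N + 1) → FinSeq // IsAdmissible d α} ≃
      {c : IncSeq d × (Fin N → FinSeq) // IsAdmissible (d - c.1.1.1) c.2} where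
  toFun α :=
    have h := (isAdmissible_snoc_iff _ _).1 (α.2.snoc_unshift.symm ▸ α.2)
    ⟨(⟨α.1 (Fin.last N), h.1⟩,
      fun j => FinSeq.map (· - (α.1 (Fin.last N)).1) (α.1 j.castSucc)), h.2⟩
  invFun c := ⟨Fin.snoc (fun j => FinSeq.map (· + c.1.1.1.1) (c.1.2 j)) c.1.1.1,
    (isAdmissible_snoc_iff _ _).2 ⟨c.1.1.2, c.2⟩⟩
  left_inv α := Subtype.ext α.2.snoc_unshift
  right_inv c := by
    refine Subtype.ext (Prod.ext (Subtype.ext ?_) (funext fun j => ?_)) <;> dsimp only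
    · exact Fin.snoc_last ..
    rw [Fin.snoc_last, Fin.snoc_castSucc, FinSeq.map_map]
    exact FinSeq.map_eq_self fun i => Nat.add_sub_cancel _ _

theorem card_isAdmissible (N d : ℕ) :
    Nat.card {α : Fin N → FinSeq // IsAdmissible d α} = (N + 1) ^ d := by
  induction N generalizing d with
  | zero => simp [IsAdmissible]
  | succ N ih =>
    have (k : ℕ) : Finite {β : Fin N → FinSeq // IsAdmissible k β} :=
      Nat.finite_of_card_ne_zero (by rw [ih]; positivity)
    calc Nat.card {α // IsAdmissible d α}
        = Nat.card (Σ x : IncSeq d, {β : Fin N → FinSeq // IsAdmissible (d - x.1.1) β}) :=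
          Nat.card_congr ((admissibleSnocEquiv N d).trans
            (Equiv.subtypeProdEquivSigmaSubtype
              fun (x : IncSeq d) β => IsAdmissible (d - x.1.1) β))
      _ = ∑ x : IncSeq d, (N + 1) ^ (d - x.1.1) := by simp only [Nat.card_sigma, ih]
      _ = ∑ s : Finset (Fin d), 1 ^ #s * (N + 1) ^ (Fintype.card (Fin d) - #s) :=
          Fintype.sum_equiv (incSeqEquivFinset d) _ _ fun x : IncSeq d => by
            rw [card_incSeqEquivFinset, one_pow, one_mul, Fintype.card_fin]
      _ = (N + 1 + 1) ^ d := by rw [Fintype.sum_pow_mul_eq_add_pow, Fintype.card_fin, add_comm]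

end

theorem stmt_8_general (N d : ℕ) (hd : 1 ≤ d) :
    {α : Fin N → Σ n : ℕ, Fin n → ℕ |
        (∀ j, StrictMono (α j).2) ∧
        (∀ j (i : Fin (α j).1),
          (∑ t ∈ Finset.univ.filter (fun t => j < t), (α t).1) ≤ (α j).2 i) ∧
        (∀ j (i : Fin (α j).1), (α j).2 i ≤ d - 1)}.ncard
      = (N + 1) ^ d := by
  rw [← Nat.card_coe_set_eq, ← card_isAdmissible N d]
  exact Nat.card_congr <| Equiv.subtypeEquivRight fun α => by
    simp only [Set.mem_ofPred_eq, IsAdmissible, FinSeq.IsIncIco, suffixSum, forall_and,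
      Nat.le_sub_one_iff_lt hd]

/-- the number of N-tuples of strictly increasing sequences
(α^1, ..., α^N) with all entries of α^j at least s_{j+1} = Σ_{t > j} n_t and all
entries at most d - 1 equals (N+1)^d. -/
theorem stmt_8 (N d : ℕ) (hN : 1 ≤ N) (hd : 1 ≤ d) :
    {α : Fin N → Σ n : ℕ, Fin n → ℕ |
        (∀ j, StrictMono (α j).2) ∧
        (∀ j (i : Fin (α j).1),
          (∑ t ∈ Finset.univ.filter (fun t => j < t), (α t).1) ≤ (α j).2 i) ∧
        (∀ j (i : Fin (α j).1), (α j).2 i ≤ d - 1)}.ncard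
      = (N + 1) ^ d :=
  stmt_8_general N d hd
end

section
/- There is an explicit bijection between the set {0, 1, ..., N}^d of d-tuples and the set of elements of B^{N+} with all entries at most d-1: given u ∈ {0,...,N}^d, for j = N down to 1, let α^j record (with appropriate relabeling after removing larger letters) the positions of the letter j; this assignment is a bijection. -/
/-!
Let `L k` be the set of positions of `u` carrying a letter `≤ k`. The paper's relabelling after
deleting the letters `> k + 1` is the order embedding of `L (k + 1)` onto the top `#L (k + 1)`
positions of `{0, …, d - 1}`, and `α^{k+1}` is the image of `L (k + 1) \ L k` under it. So `L k`
is recovered from `L (k + 1)` and `α^{k+1}` as the positions whose relabelling avoids `α^{k+1}`;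
starting from `L N = univ`, the whole chain, hence `u`, is determined by `α`.

Conversely, running this recursion on any `α ∈ B^{N+}` gives a chain with
`#L k = d - (n_N + ⋯ + n_{k+1})` by downward induction: the bounds `s_{k+2} ≤ α^{k+1} ≤ d - 1`
say exactly that `α^{k+1}` lies in the image of the relabelling of `L (k + 1)`, so each step
removes `n_{k+1}` positions, and the word with this chain encodes back to `α`.
-/

open Finset

namespace LetterPositions

section Relabel

variable {ι : Type*} [Fintype ι] [LinearOrder ι]

/-- The paper's relabelling: the elements of `S`, in increasing order, become the top `#S`
positions `card ι - #S, …, card ι - 1`. -/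
def relabel (S : Finset ι) (i : ι) : ℕ := (Fintype.card ι - #S) + #{i' ∈ S | i' < i}

lemma relabel_strictMonoOn (S : Finset ι) : StrictMonoOn (relabel S) S := by
  intro i hi i' _ hlt
  have hsub : {x ∈ S | x < i} ⊂ {x ∈ S | x < i'} :=
    (ssubset_iff_of_subset fun x hx => by
      simp only [mem_filter] at hx ⊢; exact ⟨hx.1, hx.2.trans hlt⟩).2
      ⟨i, by simp [mem_coe.1 hi, hlt], by simp⟩
  have := card_lt_card hsub
  simp only [relabel]
  omega

lemma relabel_lt_card {S : Finset ι} {i : ι} (hi : i ∈ S) : relabel S i < Fintype.card ι := by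
  have hlt : #{x ∈ S | x < i} < #S := card_lt_card (filter_ssubset.2 ⟨i, hi, lt_irrefl i⟩)
  have := card_le_univ S
  simp only [relabel]
  omega

lemma image_relabel (S : Finset ι) :
    S.image (relabel S) = Ico (Fintype.card ι - #S) (Fintype.card ι) := by
  refine eq_of_subset_of_card_le (fun v hv => ?_) ?_
  · obtain ⟨i, hi, rfl⟩ := mem_image.1 hv
    exact mem_Ico.2 ⟨Nat.le_add_right _ _, relabel_lt_card hi⟩
  · rw [card_image_of_injOn (relabel_strictMonoOn S).injOn, Nat.card_Ico]
    have := card_le_univ S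
    omega

lemma image_filter_relabel_mem {S : Finset ι} {V : Finset ℕ}
    (hV : V ⊆ Ico (Fintype.card ι - #S) (Fintype.card ι)) :
    {i ∈ S | relabel S i ∈ V}.image (relabel S) = V := by
  rw [← filter_image (p := (· ∈ V)), image_relabel, filter_mem_eq_inter, inter_eq_right.2 hV]

lemma card_filter_relabel_mem {S : Finset ι} {V : Finset ℕ}
    (hV : V ⊆ Ico (Fintype.card ι - #S) (Fintype.card ι)) :
    #{i ∈ S | relabel S i ∈ V} = #V := by
  conv_rhs => rw [← image_filter_relabel_mem hV]
  exact (card_image_of_injOn ((relabel_strictMonoOn S).injOn.mono (filter_subset _ S))).symm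

lemma filter_relabel_not_mem_image {S T : Finset ι} (hT : T ⊆ S) :
    {i ∈ S | relabel S i ∉ T.image (relabel S)} = S \ T := by
  ext i
  simp only [mem_filter, mem_sdiff, and_congr_right_iff]
  intro hi
  rw [← mem_coe, coe_image, (relabel_strictMonoOn S).injOn.mem_image_iff (coe_subset.2 hT) hi,
    mem_coe]

end Relabel

def sortedSeq (S : Finset ℕ) : Σ n : ℕ, Fin n → ℕ := ⟨#S, S.orderEmbOfFin rfl⟩

lemma sortedSeq_strictMono (S : Finset ℕ) : StrictMono (sortedSeq S).2 :=
  (S.orderEmbOfFin rfl).strictMono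

lemma range_sortedSeq (S : Finset ℕ) : Set.range (sortedSeq S).2 = S :=
  range_orderEmbOfFin S rfl

lemma sortedSeq_injective : Function.Injective sortedSeq := fun S S' h =>
  coe_injective (by rw [← range_sortedSeq, h, range_sortedSeq])

lemma sortedSeq_image {m : ℕ} {g : Fin m → ℕ} (hg : StrictMono g) :
    sortedSeq (univ.image g) = ⟨m, g⟩ := by
  have hc : #(univ.image g) = m := by
    rw [card_image_of_injective _ hg.injective, card_univ, Fintype.card_fin]
  have hmem : ∀ x, g x ∈ univ.image g := fun x => mem_image_of_mem g (mem_univ x)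
  generalize univ.image g = S at hc hmem
  subst hc
  rw [sortedSeq, orderEmbOfFin_unique rfl hmem hg]

lemma sum_filter_lt_eq_sum_Ico {M : Type*} [AddCommMonoid M] {N : ℕ} (w : ℕ → M) (j : Fin N) :
    ∑ t ∈ univ.filter (fun t : Fin N => j < t), w t = ∑ t ∈ Ico ((j : ℕ) + 1) N, w t := by
  simp only [sum_filter, Fin.lt_def]
  rw [Fin.sum_univ_eq_sum_range (fun t => if (j : ℕ) < t then w t else 0), ← sum_filter]
  congr 1
  ext t
  simp only [mem_filter, mem_range, mem_Ico]
  omega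

/-- `B^{N+}` with all entries at most `d - 1`; `α j` is the paper's `α^{j+1}`. -/
def BPlus (N d : ℕ) : Set (Fin N → Σ n : ℕ, Fin n → ℕ) :=
  {α | (∀ j, StrictMono (α j).2) ∧
    (∀ j (i : Fin (α j).1),
      (∑ t ∈ Finset.univ.filter (fun t => j < t), (α t).1) ≤ (α j).2 i) ∧
    (∀ j (i : Fin (α j).1), (α j).2 i ≤ d - 1)}

section Sublevel

variable {ι : Type*} [Fintype ι] {N : ℕ}

def sublevel (u : ι → Fin (N + 1)) (k : ℕ) : Finset ι := {i | (u i : ℕ) ≤ k}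

variable (u : ι → Fin (N + 1))

lemma sublevel_mono : Monotone (sublevel u) := fun _ _ hkl _ hi => by
  simp only [sublevel, mem_filter, mem_univ, true_and] at hi ⊢
  omega

lemma sublevel_of_le {k : ℕ} (hk : N ≤ k) : sublevel u k = univ := by
  ext i
  simp only [sublevel, mem_filter, mem_univ, true_and, iff_true]
  have := (u i).isLt
  omega

lemma eq_of_sublevel_eq {u u' : ι → Fin (N + 1)} (h : sublevel u = sublevel u') : u = u' := by
  funext i
  have hle (k : ℕ) : (u i : ℕ) ≤ k ↔ (u' i : ℕ) ≤ k := by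
    simpa [sublevel] using congrArg (i ∈ ·) (congrFun h k)
  exact Fin.ext (le_antisymm ((hle _).2 le_rfl) ((hle _).1 le_rfl))

end Sublevel

variable {ι : Type*} [Fintype ι] [LinearOrder ι] {N : ℕ}

section Encode

/-- The set of entries of the paper's `α^{k+1}`: the positions of the letter `k + 1`, relabelled
after deleting all larger letters. -/
def letterVals (u : ι → Fin (N + 1)) (k : ℕ) : Finset ℕ :=
  (sublevel u (k + 1) \ sublevel u k).image (relabel (sublevel u (k + 1)))

def encode (u : ι → Fin (N + 1)) (j : Fin N) : Σ n : ℕ, Fin n → ℕ :=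
  sortedSeq (letterVals u j)

variable (u : ι → Fin (N + 1))

lemma sublevel_eq_filter (k : ℕ) :
    sublevel u k =
      {i ∈ sublevel u (k + 1) | relabel (sublevel u (k + 1)) i ∉ letterVals u k} := by
  rw [letterVals, filter_relabel_not_mem_image sdiff_subset,
    Finset.sdiff_sdiff_eq_self (sublevel_mono u (Nat.le_add_right k 1))]

lemma card_sublevel_add_sum (k : ℕ) :
    #(sublevel u k) + ∑ t ∈ Ico k N, #(letterVals u t) = Fintype.card ι := by
  rcases le_or_gt N k with hk | hk
  · simp [sublevel_of_le u hk, Ico_eq_empty_of_le hk]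
  replace hk := hk.le
  induction hk using Nat.decreasingInduction with
  | self => simp [sublevel_of_le u le_rfl]
  | of_succ k hk ih =>
    have hsdiff := card_sdiff_add_card_eq_card (sublevel_mono u (Nat.le_add_right k 1))
    rw [sum_eq_sum_Ico_succ_bot hk, letterVals,
      card_image_of_injOn ((relabel_strictMonoOn _).injOn.mono sdiff_subset)]
    omega

lemma relabel_sublevel (k : ℕ) (i : ι) :
    relabel (sublevel u (k + 1)) i =
      #{i' | k + 1 < (u i' : ℕ)} + #{i' | i' < i ∧ (u i' : ℕ) ≤ k + 1} := by
  have hcompl : #{i' | k + 1 < (u i' : ℕ)} = Fintype.card ι - #(sublevel u (k + 1)) := by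
    have := card_filter_add_card_filter_not (s := univ) fun i' => (u i' : ℕ) ≤ k + 1
    simp only [not_le, card_univ] at this
    rw [sublevel]
    omega
  rw [relabel, hcompl, sublevel, filter_filter]
  simp only [and_comm]

lemma coe_letterVals (k : ℕ) :
    (letterVals u k : Set ℕ) = {v | ∃ i, (u i : ℕ) = k + 1 ∧
      v = #{i' | k + 1 < (u i' : ℕ)} + #{i' | i' < i ∧ (u i' : ℕ) ≤ k + 1}} := by
  ext v
  simp only [letterVals, coe_image, Set.mem_image, mem_coe, mem_sdiff, sublevel, mem_filter,
    mem_univ, true_and, Set.mem_ofPred_eq, ← relabel_sublevel]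
  constructor
  · rintro ⟨i, ⟨h1, h2⟩, rfl⟩
    exact ⟨i, by omega, rfl⟩
  · rintro ⟨i, hi, rfl⟩
    exact ⟨i, ⟨by omega, by omega⟩, rfl⟩

lemma encode_mem : encode u ∈ BPlus N (Fintype.card ι) := by
  have hsub (j : Fin N) : letterVals u j ⊆
      Ico (Fintype.card ι - #(sublevel u (j + 1))) (Fintype.card ι) :=
    image_relabel (sublevel u (j + 1)) ▸ image_subset_image sdiff_subset
  have hmem (j : Fin N) (i : Fin (encode u j).1) : (encode u j).2 i ∈ letterVals u j := by
    rw [← mem_coe, ← range_sortedSeq]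
    exact Set.mem_range_self i
  refine ⟨fun j => sortedSeq_strictMono _, fun j i => ?_, fun j i => ?_⟩
  · have hv := mem_Ico.1 (hsub j (hmem j i))
    have := card_sublevel_add_sum u (j + 1)
    change ∑ t ∈ univ.filter (fun t => j < t), #(letterVals u t) ≤ _
    rw [sum_filter_lt_eq_sum_Ico (fun t => #(letterVals u t))]
    exact le_trans (by omega) hv.1
  · have hv := mem_Ico.1 (hsub j (hmem j i))
    omega

end Encode

section Decode

/-- The inverse construction: `chain V N k` is the set of positions that receive a letter
at most `k` when the letters `N, N - 1, …, k + 1` are placed in turn according to `V`. -/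
def chain (V : ℕ → Finset ℕ) (N k : ℕ) : Finset ι :=
  if N ≤ k then univ
  else {i ∈ chain V N (k + 1) | relabel (chain V N (k + 1)) i ∉ V k}
termination_by N - k

variable {V : ℕ → Finset ℕ}

lemma chain_of_le {k : ℕ} (hk : N ≤ k) : chain (ι := ι) V N k = univ := by
  rw [chain, if_pos hk]

lemma chain_of_lt {k : ℕ} (hk : k < N) :
    chain (ι := ι) V N k =
      {i ∈ chain (ι := ι) V N (k + 1) | relabel (chain V N (k + 1)) i ∉ V k} := by
  rw [chain, if_neg (not_le.2 hk)]

lemma chain_mono : Monotone (chain (ι := ι) V N) := by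
  refine monotone_nat_of_le_succ fun k => ?_
  rcases le_or_gt N k with hk | hk
  · rw [chain_of_le (ι := ι) (hk.trans (Nat.le_add_right k 1))]; exact subset_univ _
  · rw [chain_of_lt (ι := ι) hk]; exact filter_subset _ _

lemma eq_chain {C : ℕ → Finset ι} (htop : ∀ k, N ≤ k → C k = univ)
    (hstep : ∀ k < N, C k = {i ∈ C (k + 1) | relabel (C (k + 1)) i ∉ V k}) :
    C = chain V N := by
  funext k
  rcases le_or_gt N k with hk | hk
  · rw [htop k hk, chain_of_le hk]
  replace hk := hk.le
  induction hk using Nat.decreasingInduction with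
  | self => rw [htop N le_rfl, chain_of_le le_rfl]
  | of_succ k hk ih => rw [hstep k hk, chain_of_lt hk, ih]

lemma card_chain_add_sum
    (hV : ∀ k < N, V k ⊆ Ico (∑ t ∈ Ico (k + 1) N, #(V t)) (Fintype.card ι)) (k : ℕ) :
    #(chain (ι := ι) V N k) + ∑ t ∈ Ico k N, #(V t) = Fintype.card ι := by
  rcases le_or_gt N k with hk | hk
  · simp [chain_of_le hk, Ico_eq_empty_of_le hk]
  replace hk := hk.le
  induction hk using Nat.decreasingInduction with
  | self => simp [chain_of_le (ι := ι) (V := V) le_rfl]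
  | of_succ k hk ih =>
    have hVk :
        V k ⊆ Ico (Fintype.card ι - #(chain (ι := ι) V N (k + 1))) (Fintype.card ι) := by
      rw [show Fintype.card ι - #(chain (ι := ι) V N (k + 1)) =
          ∑ t ∈ Ico (k + 1) N, #(V t) by omega]
      exact hV k hk
    have hsplit := card_filter_add_card_filter_not (s := chain (ι := ι) V N (k + 1))
      fun i => relabel (chain V N (k + 1)) i ∈ V k
    rw [card_filter_relabel_mem hVk, ← chain_of_lt hk] at hsplit
    rw [sum_eq_sum_Ico_succ_bot hk]
    omega

lemma image_sdiff_chain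
    (hV : ∀ k < N, V k ⊆ Ico (∑ t ∈ Ico (k + 1) N, #(V t)) (Fintype.card ι))
    {k : ℕ} (hk : k < N) :
    (chain V N (k + 1) \ chain V N k).image (relabel (chain (ι := ι) V N (k + 1))) = V k := by
  have hVk : V k ⊆ Ico (Fintype.card ι - #(chain (ι := ι) V N (k + 1))) (Fintype.card ι) := by
    have := card_chain_add_sum hV (k + 1)
    rw [show Fintype.card ι - #(chain (ι := ι) V N (k + 1)) =
        ∑ t ∈ Ico (k + 1) N, #(V t) by omega]
    exact hV k hk
  rw [← image_filter_relabel_mem hVk, chain_of_lt hk]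
  congr 1
  ext i
  simp only [mem_sdiff, mem_filter, not_and, not_not]
  tauto

def decode (V : ℕ → Finset ℕ) (N : ℕ) (i : ι) : Fin (N + 1) :=
  ⟨Nat.find (⟨N, by simp [chain_of_le]⟩ : ∃ k, i ∈ chain V N k),
    Nat.lt_succ_of_le (Nat.find_min' _ (by simp [chain_of_le]))⟩

lemma sublevel_decode : sublevel (decode (ι := ι) V N) = chain V N := by
  ext k i
  simp only [sublevel, decode, mem_filter, mem_univ, true_and, Nat.find_le_iff]
  exact ⟨fun ⟨m, hm, hi⟩ => chain_mono hm hi, fun hi => ⟨k, le_rfl, hi⟩⟩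

lemma sublevel_eq_chain {u : ι → Fin (N + 1)} (hV : ∀ k < N, letterVals u k = V k) :
    sublevel u = chain V N :=
  eq_chain (fun _ => sublevel_of_le u) fun k hk => by rw [← hV k hk, ← sublevel_eq_filter]

end Decode

lemma encode_injective : Function.Injective (encode (ι := ι) (N := N)) := by
  intro u u' h
  have hV (k : ℕ) (hk : k < N) : letterVals u' k = letterVals u k :=
    sortedSeq_injective (congrFun h ⟨k, hk⟩).symm
  exact eq_of_sublevel_eq ((sublevel_eq_chain fun _ _ => rfl).trans (sublevel_eq_chain hV).symm)

def entrySet (α : Fin N → Σ n : ℕ, Fin n → ℕ) (k : ℕ) : Finset ℕ :=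
  if h : k < N then univ.image (α ⟨k, h⟩).2 else ∅

lemma encode_decode {d : ℕ} (hd : 1 ≤ d) {α : Fin N → Σ n : ℕ, Fin n → ℕ}
    (hα : α ∈ BPlus N d) :
    encode (decode (ι := Fin d) (entrySet α) N) = α := by
  obtain ⟨hmono, hlow, hup⟩ := hα
  have hcard (t : Fin N) : #(entrySet α t) = (α t).1 := by
    rw [entrySet, dif_pos t.isLt, card_image_of_injective _ (hmono _).injective, card_univ,
      Fintype.card_fin]
  have hV (k : ℕ) (hk : k < N) :
      entrySet α k ⊆
        Ico (∑ t ∈ Ico (k + 1) N, #(entrySet α t)) (Fintype.card (Fin d)) := by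
    intro v hv
    rw [entrySet, dif_pos hk] at hv
    obtain ⟨i, -, rfl⟩ := mem_image.1 hv
    have hsum : ∑ t ∈ univ.filter (fun t => (⟨k, hk⟩ : Fin N) < t), (α t).1 =
        ∑ t ∈ Ico (k + 1) N, #(entrySet α t) :=
      (sum_congr rfl fun t _ => (hcard t).symm).trans
        (sum_filter_lt_eq_sum_Ico (fun t => #(entrySet α t)) ⟨k, hk⟩)
    have := hlow ⟨k, hk⟩ i
    have := hup ⟨k, hk⟩ i
    rw [Fintype.card_fin, mem_Ico]
    constructor <;> omega
  funext j
  rw [encode, letterVals, sublevel_decode, image_sdiff_chain hV j.isLt, entrySet, dif_pos j.isLt,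
    sortedSeq_image (hmono _)]

end LetterPositions

theorem stmt_9_general (N d : ℕ) (hd : 1 ≤ d) :
    ∃ Φ : (Fin d → Fin (N + 1)) → (Fin N → Σ n : ℕ, Fin n → ℕ),
      Set.BijOn Φ Set.univ
        {α : Fin N → Σ n : ℕ, Fin n → ℕ |
          (∀ j, StrictMono (α j).2) ∧
          (∀ j (i : Fin (α j).1),
            (∑ t ∈ Finset.univ.filter (fun t => j < t), (α t).1) ≤ (α j).2 i) ∧
          (∀ j (i : Fin (α j).1), (α j).2 i ≤ d - 1)} ∧
      (∀ u, ∀ j : Fin N, StrictMono (Φ u j).2) ∧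
      ∀ u, ∀ j : Fin N,
        Set.range (Φ u j).2 =
          {v : ℕ | ∃ i : Fin d, (u i : ℕ) = (j : ℕ) + 1 ∧
            v = (Finset.univ.filter
                  (fun i' : Fin d => (j : ℕ) + 1 < (u i' : ℕ))).card
              + (Finset.univ.filter
                  (fun i' : Fin d => i' < i ∧ (u i' : ℕ) ≤ (j : ℕ) + 1)).card} := by
  open LetterPositions in
  have hmaps : Set.MapsTo (encode (ι := Fin d) (N := N)) Set.univ (BPlus N d) := fun u _ => by
    simpa only [Fintype.card_fin] using encode_mem u
  refine ⟨encode, ⟨hmaps, encode_injective.injOn, fun α hα => ?_⟩,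
    fun u j => sortedSeq_strictMono _, fun u j => ?_⟩
  · exact ⟨decode (entrySet α) N, Set.mem_univ _, encode_decode hd hα⟩
  · rw [encode, range_sortedSeq, coe_letterVals]

/-- the explicit bijection between {0, ..., N}^d and the elements of
B^{N+} with all entries ≤ d - 1: for u ∈ {0,...,N}^d and the letter j+1
(j : Fin N), the sequence α^{j+1} = Φ(u) j lists, in increasing order, the values
#{i' : u_{i'} > j+1} + #{i' < i : u_{i'} ≤ j+1} over positions i with u_i = j+1
(this is the paper's "remove larger letters and relabel" construction). -/
theorem stmt_9 (N d : ℕ) (hN : 1 ≤ N) (hd : 1 ≤ d) :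
    ∃ Φ : (Fin d → Fin (N + 1)) → (Fin N → Σ n : ℕ, Fin n → ℕ),
      Set.BijOn Φ Set.univ
        {α : Fin N → Σ n : ℕ, Fin n → ℕ |
          (∀ j, StrictMono (α j).2) ∧
          (∀ j (i : Fin (α j).1),
            (∑ t ∈ Finset.univ.filter (fun t => j < t), (α t).1) ≤ (α j).2 i) ∧
          (∀ j (i : Fin (α j).1), (α j).2 i ≤ d - 1)} ∧
      (∀ u, ∀ j : Fin N, StrictMono (Φ u j).2) ∧
      ∀ u, ∀ j : Fin N,
        Set.range (Φ u j).2 =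
          {v : ℕ | ∃ i : Fin d, (u i : ℕ) = (j : ℕ) + 1 ∧
            v = (Finset.univ.filter
                  (fun i' : Fin d => (j : ℕ) + 1 < (u i' : ℕ))).card
              + (Finset.univ.filter
                  (fun i' : Fin d => i' < i ∧ (u i' : ℕ) ≤ (j : ℕ) + 1)).card} :=
  stmt_9_general N d hd
end

section
/- The map τ⁺ sending an N-tuple (α^1, ..., α^N) ∈ B^{N+} to the N-tuple of sequences (a^j_i)_{j,i} with a^j_i = α^j_i - s_{j+1} - i + 1 is a bijection from B^{N+} onto the set A^N of N-tuples of weakly increasing finite sequences of naturals. -/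
/-!
Subtracting the index `i` turns a strictly increasing sequence of naturals into a weakly
increasing one, and adding it back undoes this; the shift by `s_{j+1}` is harmless because both
maps preserve the lengths `n_j`, hence every `s_{j+1}`. The lower bound `α^j_i ≥ s_{j+1}` of
`B^{N+}` is exactly what makes the truncated subtraction `α^j_i - s_{j+1} - i` exact.
-/

open Finset

section StrictMonoFin

variable {n : ℕ}

lemma StrictMono.apply_add_le_apply_add {f : Fin n → ℕ} (hf : StrictMono f) {i j : Fin n}
    (hij : i ≤ j) : f i + j ≤ f j + i := by
  obtain ⟨i, hi⟩ := i
  obtain ⟨j, hj⟩ := j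
  simp only [Fin.mk_le_mk] at hij ⊢
  induction j, hij using Nat.le_induction with
  | base => rfl
  | succ j _ ih =>
    have step : f ⟨j, by omega⟩ < f ⟨j + 1, hj⟩ := hf (Fin.mk_lt_mk.2 j.lt_succ_self)
    have := ih (by omega)
    omega

lemma StrictMono.monotone_sub_sub_val {f : Fin n → ℕ} (hf : StrictMono f) (s : ℕ) :
    Monotone fun i => f i - s - i := fun i j hij => by
  show f i - s - i ≤ f j - s - j
  have := hf.apply_add_le_apply_add hij
  have : (i : ℕ) ≤ j := hij
  omega

lemma StrictMono.add_val_le {f : Fin n → ℕ} (hf : StrictMono f) {s : ℕ} (hs : ∀ i, s ≤ f i)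
    (i : Fin n) : s + i ≤ f i := by
  have : f ⟨0, i.pos⟩ + i ≤ f i + 0 := hf.apply_add_le_apply_add (Nat.zero_le _)
  have := hs ⟨0, i.pos⟩
  omega

lemma Monotone.strictMono_add_add_val {a : Fin n → ℕ} (ha : Monotone a) (s : ℕ) :
    StrictMono fun i => a i + s + i :=
  (ha.add_const s).add_strictMono Fin.val_strictMono

end StrictMonoFin

section TauPlus

variable {N : ℕ}

def tailLength (α : Fin N → Σ n : ℕ, Fin n → ℕ) (j : Fin N) : ℕ :=
  ∑ t ∈ univ.filter (fun t => j < t), (α t).1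

def tauPlusInv (a : Fin N → Σ n : ℕ, Fin n → ℕ) : Fin N → Σ n : ℕ, Fin n → ℕ :=
  fun j => ⟨(a j).1, fun i => (a j).2 i + tailLength a j + i⟩

end TauPlus

/-- the map τ⁺ with (τ⁺ α)^j_i = α^j_i - s_{j+1} - i + 1 (here
0-indexed: α^j_i - s_{j+1} - i, with s_{j+1} = Σ_{t > j} n_t) is a bijection from
B^{N+} onto the set A^N of N-tuples of weakly increasing finite sequences. -/
theorem stmt_10 (N : ℕ) :
    Set.BijOn
      (fun α : Fin N → Σ n : ℕ, Fin n → ℕ =>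
        fun j => (⟨(α j).1, fun i =>
          (α j).2 i - (∑ t ∈ Finset.univ.filter (fun t => j < t), (α t).1)
            - (i : ℕ)⟩ : Σ n : ℕ, Fin n → ℕ))
      {α : Fin N → Σ n : ℕ, Fin n → ℕ |
        (∀ j, StrictMono (α j).2) ∧
        ∀ j (i : Fin (α j).1),
          (∑ t ∈ Finset.univ.filter (fun t => j < t), (α t).1) ≤ (α j).2 i}
      {a : Fin N → Σ n : ℕ, Fin n → ℕ | ∀ j, Monotone (a j).2} := by
  refine Set.InvOn.bijOn (f' := tauPlusInv) ⟨fun α ⟨hmono, hbound⟩ => ?_, fun a _ => ?_⟩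
    (fun α ⟨hmono, _⟩ j => (hmono j).monotone_sub_sub_val _)
    (fun a ha => ⟨fun j => (ha j).strictMono_add_add_val _, fun j i => ?_⟩)
  · funext j
    refine Sigma.ext rfl (heq_of_eq (funext fun i => ?_))
    show (α j).2 i - tailLength α j - i + tailLength α j + i = (α j).2 i
    have : tailLength α j + i ≤ (α j).2 i := (hmono j).add_val_le (hbound j) i
    omega
  · funext j
    refine Sigma.ext rfl (heq_of_eq (funext fun i => ?_))
    show (a j).2 i + tailLength a j + i - tailLength a j - i = (a j).2 i
    omega
  · exact (Nat.le_add_left _ _).trans (Nat.le_add_right _ _)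
end

section
/- For each strictly increasing sequence α = (α_1 < ... < α_n) of naturals, the product of the diagonal entries of the matrix Δ_1(α) is a nonzero scalar multiple of (y')^{α_n - α_{n-1} - 1} (y'')^{α_{n-1} - α_{n-2} - 1} ⋯ (y^{(n-1)})^{α_2 - α_1 - 1} (y^{(n)})^{α_1}; in particular the variable y = y^{(0)} does not divide this diagonal monomial. -/
/-!
The `i`-th surviving row `r_i` of `Δ_1(α)` is preceded by exactly `i` surviving rows and by
`countBelow α n r_i` deleted rows `α_j`, so `r_i = i + countBelow α n r_i` and the diagonal
entry in the column of type `n + i` is a nonzero binomial coefficient times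
`y^{(n - countBelow α n r_i)}`. The surviving rows with `countBelow = 0` are the `α_0` numbers
below `α_0`, those with `countBelow = j + 1` the `α_{j+1} - α_j - 1` numbers strictly between
`α_j` and `α_{j+1}`; grouping the product by this count gives the monomial. As
`countBelow < n` on surviving rows, no diagonal entry involves `y`.
-/

open Finset MvPolynomial

theorem Finset.card_filter_lt_orderEmbOfFin {ι : Type*} [LinearOrder ι] (s : Finset ι) {k : ℕ}
    (h : #s = k) (i : Fin k) : #{y ∈ s | y < s.orderEmbOfFin h i} = i := by
  have : {y ∈ s | y < s.orderEmbOfFin h i} = (Iio i).map (s.orderEmbOfFin h).toEmbedding := by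
    ext y
    simp only [mem_filter, mem_map, mem_Iio, RelEmbedding.coe_toEmbedding]
    constructor
    · rintro ⟨hy, hyi⟩
      obtain ⟨j, rfl⟩ : y ∈ Set.range (s.orderEmbOfFin h) := by simpa using hy
      exact ⟨j, by simpa using hyi, rfl⟩
    · rintro ⟨j, hji, rfl⟩
      exact ⟨s.orderEmbOfFin_mem h j, by simpa using hji⟩
  rw [this, card_map, Fin.card_Iio]

theorem MvPolynomial.not_X_dvd_of_eval_ne_zero {R σ : Type*} [CommSemiring R] {i : σ}
    {p : MvPolynomial σ R} (v : σ → R) (hv : v i = 0) (hp : eval v p ≠ 0) : ¬ X i ∣ p := by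
  rintro ⟨q, rfl⟩
  simp [hv] at hp

def gaps (α : ℕ → ℕ) (n : ℕ) : Finset ℕ := range (α (n - 1) + 1) \ (range n).image α

def countBelow (α : ℕ → ℕ) (n x : ℕ) : ℕ := #{j ∈ range n | α j < x}

theorem mem_gaps {α : ℕ → ℕ} {n x : ℕ} :
    x ∈ gaps α n ↔ x ≤ α (n - 1) ∧ ∀ j < n, α j ≠ x := by
  simp [gaps]

namespace StrictMonoOn

variable {α : ℕ → ℕ} {n : ℕ}

theorem lt_countBelow_iff (hα : StrictMonoOn α (Set.Iio n)) {j x : ℕ} (hj : j < n) :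
    j < countBelow α n x ↔ α j < x := by
  constructor
  · intro h
    by_contra! hx
    have : {i ∈ range n | α i < x} ⊆ range j := by
      intro i hi
      simp only [mem_filter, mem_range] at hi ⊢
      by_contra! hji
      have := hα.monotoneOn hj hi.1 hji
      omega
    have := card_le_card this
    simp only [countBelow, card_range] at h this
    omega
  · intro hx
    have : range (j + 1) ⊆ {i ∈ range n | α i < x} := by
      intro i hi
      simp only [mem_filter, mem_range] at hi ⊢
      exact ⟨by omega, (hα.monotoneOn (by simp; omega) hj (by omega)).trans_lt hx⟩
    simpa [countBelow] using card_le_card this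

theorem card_filter_gaps_lt_add_countBelow (hα : StrictMonoOn α (Set.Iio n)) {x : ℕ}
    (hx : x ≤ α (n - 1) + 1) : #{y ∈ gaps α n | y < x} + countBelow α n x = x := by
  have hgaps : {y ∈ gaps α n | y < x} = range x \ (range n).image α := by
    ext y
    simp only [gaps, mem_filter, mem_sdiff, mem_range]
    constructor
    · rintro ⟨⟨-, hyα⟩, hyx⟩
      exact ⟨hyx, hyα⟩
    · rintro ⟨hyx, hyα⟩
      exact ⟨⟨by omega, hyα⟩, hyx⟩
  have hbelow : range x ∩ (range n).image α = {j ∈ range n | α j < x}.image α := by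
    ext y
    simp only [mem_inter, mem_range, mem_image, mem_filter]
    grind
  have hinj : Set.InjOn α ↑({j ∈ range n | α j < x} : Finset ℕ) :=
    hα.injOn.mono fun j hj ↦ by simpa using (mem_filter.1 hj).1
  rw [hgaps, countBelow, ← card_image_of_injOn hinj, ← hbelow, card_sdiff_add_card_inter,
    card_range]

theorem orderEmbOfFin_gaps (hα : StrictMonoOn α (Set.Iio n)) {k : ℕ} (h : #(gaps α n) = k)
    (i : Fin k) :
    (gaps α n).orderEmbOfFin h i = i + countBelow α n ((gaps α n).orderEmbOfFin h i) := by
  have hmem := mem_range.1 (mem_sdiff.1 ((gaps α n).orderEmbOfFin_mem h i)).1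
  have := hα.card_filter_gaps_lt_add_countBelow (x := (gaps α n).orderEmbOfFin h i) (by omega)
  rw [card_filter_lt_orderEmbOfFin] at this
  omega

theorem countBelow_lt_of_mem_gaps (hα : StrictMonoOn α (Set.Iio n)) (hn : 0 < n) {x : ℕ}
    (hx : x ∈ gaps α n) : countBelow α n x < n := by
  by_contra! h
  have := (hα.lt_countBelow_iff (j := n - 1) (x := x) (by omega)).1 (by omega)
  have := (mem_gaps.1 hx).1
  omega

theorem filter_gaps_countBelow_eq_zero (hα : StrictMonoOn α (Set.Iio n)) (hn : 0 < n) :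
    {x ∈ gaps α n | countBelow α n x = 0} = range (α 0) := by
  ext x
  have h0 := hα.lt_countBelow_iff (x := x) hn
  simp only [mem_filter, mem_gaps, mem_range]
  constructor
  · rintro ⟨⟨-, hne⟩, hW⟩
    have := hne 0 hn
    omega
  · intro hx
    have hle j (hj : j < n) : α 0 ≤ α j := hα.monotoneOn (by simp; omega) (by simpa) (by omega)
    refine ⟨⟨(hx.trans_le (hle _ (by omega))).le, fun j hj ↦ (hx.trans_le (hle j hj)).ne'⟩,
      ?_⟩
    omega

theorem filter_gaps_countBelow_eq_succ (hα : StrictMonoOn α (Set.Iio n)) {j : ℕ}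
    (hj : j + 1 < n) : {x ∈ gaps α n | countBelow α n x = j + 1} = Ioo (α j) (α (j + 1)) := by
  ext x
  have hj₀ := hα.lt_countBelow_iff (x := x) (j := j) (by omega)
  have hj₁ := hα.lt_countBelow_iff (x := x) hj
  simp only [mem_filter, mem_gaps, mem_Ioo]
  constructor
  · rintro ⟨⟨-, hne⟩, hW⟩
    have := hne (j + 1) hj
    omega
  · rintro ⟨hjx, hxj⟩
    refine ⟨⟨?_, fun i hi ↦ ?_⟩, by omega⟩
    · exact hxj.le.trans (hα.monotoneOn (by simpa) (by simp; omega) (by omega))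
    · rcases Nat.lt_or_ge j i with hji | hij
      · exact (hxj.trans_le (hα.monotoneOn (by simpa) (by simpa) hji)).ne'
      · exact ((hα.monotoneOn (by simp; omega) (by simp; omega) hij).trans_lt hjx).ne

theorem prod_gaps_countBelow {M : Type*} [CommMonoid M] (hα : StrictMonoOn α (Set.Iio n))
    (hn : 0 < n) (f : ℕ → M) :
    ∏ x ∈ gaps α n, f (n - countBelow α n x)
      = f n ^ α 0 * ∏ j ∈ range (n - 1), f (n - 1 - j) ^ (α (j + 1) - α j - 1) := by
  obtain ⟨k, rfl⟩ : ∃ k, n = k + 1 := ⟨n - 1, by omega⟩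
  rw [← prod_fiberwise_of_maps_to' (t := range (k + 1))
      (fun x hx ↦ mem_range.2 (hα.countBelow_lt_of_mem_gaps hn hx)) (fun t ↦ f (k + 1 - t)),
    prod_range_succ', mul_comm]
  simp only [prod_const, hα.filter_gaps_countBelow_eq_zero hn, card_range]
  congr 1
  refine prod_congr rfl fun j hj ↦ ?_
  rw [hα.filter_gaps_countBelow_eq_succ (by simpa using hj), Nat.card_Ioo,
    show k + 1 - (j + 1) = k + 1 - 1 - j by omega, Nat.sub_sub]

end StrictMonoOn

/-- for α = (α_1 < ... < α_n) (0-indexed: α 0 < ... < α (n-1)), the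
product of the diagonal entries of Δ_1(α) — whose rows are indexed by the elements
of {0, ..., α_{n-1}} not of the form α_j, in increasing order, and whose i-th
column is the column of type n + i in the variable y, so that the (i,i) entry is
binom(n+i, r_i) y^{(n+i-r_i)} — is a nonzero scalar multiple of
(y^{(n)})^{α_0} ∏_{j<n-1} (y^{(n-1-j)})^{α_{j+1}-α_j-1}; in particular y = y^{(0)}
does not divide it. Variables: `X l` = y^{(l)}. -/
theorem stmt_13 (n : ℕ) (hn : 1 ≤ n) (α : ℕ → ℕ)
    (hα : ∀ i j, i < j → j ≤ n - 1 → α i < α j)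
    (R : Finset ℕ)
    (hR : R = Finset.range (α (n - 1) + 1) \ (Finset.range n).image α)
    (hcard : R.card = α (n - 1) + 1 - n) :
    ∃ c : ℂ, c ≠ 0 ∧
      (∏ i : Fin (α (n - 1) + 1 - n),
          (MvPolynomial.C (((n + (i : ℕ)).choose (R.orderEmbOfFin hcard i)) : ℂ)
            * MvPolynomial.X (n + (i : ℕ) - R.orderEmbOfFin hcard i)
            : MvPolynomial ℕ ℂ))
        = MvPolynomial.C c
          * (MvPolynomial.X n ^ α 0
            * ∏ j ∈ Finset.range (n - 1),
                MvPolynomial.X (n - 1 - j) ^ (α (j + 1) - α j - 1)) ∧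
      ¬ (MvPolynomial.X 0 : MvPolynomial ℕ ℂ) ∣
          ∏ i : Fin (α (n - 1) + 1 - n),
            (MvPolynomial.C (((n + (i : ℕ)).choose (R.orderEmbOfFin hcard i)) : ℂ)
              * MvPolynomial.X (n + (i : ℕ) - R.orderEmbOfFin hcard i)) := by
  replace hα : StrictMonoOn α (Set.Iio n) := fun i _ j hj hij ↦
    hα i j hij (by simp at hj; omega)
  obtain rfl : R = gaps α n := hR
  set e := (gaps α n).orderEmbOfFin hcard
  have hrow (i) : e i = i + countBelow α n (e i) := hα.orderEmbOfFin_gaps hcard i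
  have htype (i) : countBelow α n (e i) < n := hα.countBelow_lt_of_mem_gaps hn (by simp [e])
  have hvar (i : Fin (α (n - 1) + 1 - n)) : n + i - e i = n - countBelow α n (e i) := by
    have := hrow i
    omega
  have hchoose (i : Fin (α (n - 1) + 1 - n)) : ((n + i).choose (e i) : ℂ) ≠ 0 := by
    have := hrow i
    have := htype i
    exact_mod_cast (Nat.choose_pos (by omega)).ne'
  have hmonomial : ∏ i, (X (n + i - e i) : MvPolynomial ℕ ℂ)
      = X n ^ α 0 * ∏ j ∈ range (n - 1), X (n - 1 - j) ^ (α (j + 1) - α j - 1) := by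
    simp only [hvar]
    rw [← hα.prod_gaps_countBelow hn, ← map_orderEmbOfFin_univ _ hcard, prod_map]
    rfl
  refine ⟨∏ i : Fin (α (n - 1) + 1 - n), ((n + i).choose (e i) : ℂ),
    prod_ne_zero_iff.2 fun i _ ↦ hchoose i, ?_, ?_⟩
  · rw [prod_mul_distrib, ← map_prod, hmonomial]
  · refine not_X_dvd_of_eval_ne_zero (fun l ↦ if l = 0 then 0 else 1) (by simp) ?_
    simp only [map_prod, map_mul, eval_C, eval_X, hvar]
    refine prod_ne_zero_iff.2 fun i _ ↦ ?_
    rw [if_neg (by have := htype i; omega), mul_one]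
    exact hchoose i
end

section
/- For N-tuples α = (α^1, ..., α^N) ∈ B^{N+}, the determinant of the matrix Δ_0(α), whose (i, c)-entry for the column of type α^j_t in variable x_{0j} is binom(α^j_t, i-1) x_{0j}^{(α^j_t - i + 1)}, is weight-homogeneous: all its monomials have weight w(α) = Σ_{j=1}^N Σ_{i=1}^{n_j} (α^j_i - s_{j+1} - i + 2), where x_{0j}^{(a)} has weight a + 1. -/
/-!
Give `x_{0j}^{(a)}` the weight `a + 1` in `ℤ`. The entry of `Δ_0(α)` in row position `q` and column
type `a` is weighted homogeneous of weight `(a + 1) - q`: for `q ≤ a` this is the weight of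
`x^{(a - q)}`, and for `q > a` the binomial coefficient kills the entry. A matrix whose entries have
weights of the form `f c - g r` has a determinant of weight `∑ f - ∑ g`, since each Leibniz term
`∏ A (τ c) c` sums `f` over all columns and `g` over a permutation of the rows. Strict monotonicity
and the bound `α^j_1 ≥ s_{j+1}` give `α^j_i ≥ s_{j+1} + i`, so the truncated differences in the
stated weight agree with the integer ones.
-/

open MvPolynomial

theorem Fin.add_le_of_strictMono {n s : ℕ} {a : Fin n → ℕ} (ha : StrictMono a)
    (hs : ∀ i, s ≤ a i) (i : Fin n) : s + i ≤ a i := by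
  obtain ⟨k, hk⟩ := i
  induction k with
  | zero => exact hs _
  | succ k ih =>
    have hlt : a ⟨k, by omega⟩ < a ⟨k + 1, hk⟩ := ha (Nat.lt_succ_self k)
    have := ih (by omega)
    dsimp only at this ⊢
    omega

theorem Matrix.det_isWeightedHomogeneous {σ R M ι : Type*} [CommRing R] [AddCommGroup M]
    [Fintype ι] [DecidableEq ι] {w : σ → M} {A : Matrix ι ι (MvPolynomial σ R)} (f g : ι → M)
    (hA : ∀ r c, (A r c).IsWeightedHomogeneous w (f c - g r)) :
    A.det.IsWeightedHomogeneous w (∑ c, f c - ∑ r, g r) := by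
  rw [Matrix.det_apply]
  refine IsWeightedHomogeneous.sum _ _ _ fun τ _ => ?_
  have hprod := IsWeightedHomogeneous.prod Finset.univ _ _ fun c _ => hA (τ c) c
  rw [Finset.sum_sub_distrib, Equiv.sum_comp τ g] at hprod
  rw [Units.smul_def]
  exact (weightedHomogeneousSubmodule R w _).toAddSubgroup.zsmul_mem hprod _

theorem isWeightedHomogeneous_C_choose_mul_X {R ι : Type*} [CommSemiring R] (j : ι) (a q : ℕ) :
    (C (a.choose q : R) * X (j, a - q)).IsWeightedHomogeneous
      (fun p : ι × ℕ => (p.2 : ℤ) + 1) ((a : ℤ) + 1 - q) := by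
  rcases le_or_gt q a with hqa | haq
  · have := (isWeightedHomogeneous_X R (fun p : ι × ℕ => (p.2 : ℤ) + 1) (j, a - q)).C_mul
      (a.choose q : R)
    convert this using 1
    push_cast [hqa]
    ring
  · rw [Nat.choose_eq_zero_of_lt haq, Nat.cast_zero, C_0, zero_mul]
    exact isWeightedHomogeneous_zero R _ _

/-- for α = (α^1, ..., α^N) ∈ B^{N+}, the determinant of Δ_0(α) is
weight-homogeneous of weight w(α) = Σ_j Σ_i (α^j_i - s_{j+1} - i + 2) (1-indexed;
0-indexed "+1"), where the variable x_{0j}^{(a)} = `X (j, a)` has weight a + 1.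
The matrix is indexed by pairs (j, i), a pair occupying row/column position
s_{j+1} + i, and the entry in the column of type α^j_t at row position q is
binom(α^j_t, q) x_{0j}^{(α^j_t - q)}. -/
theorem stmt_18 (N : ℕ) (n : Fin N → ℕ) (α : (j : Fin N) → Fin (n j) → ℕ)
    (hmono : ∀ j, StrictMono (α j))
    (hbound : ∀ j i,
      (∑ t ∈ Finset.univ.filter (fun t => j < t), n t) ≤ α j i) :
    let sAbove : Fin N → ℕ :=
      fun j => ∑ t ∈ Finset.univ.filter (fun t => j < t), n t
    let pos : (Σ j : Fin N, Fin (n j)) → ℕ := fun r => sAbove r.1 + (r.2 : ℕ)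
    let M : Matrix (Σ j : Fin N, Fin (n j)) (Σ j : Fin N, Fin (n j))
        (MvPolynomial (Fin N × ℕ) ℂ) :=
      fun r c => MvPolynomial.C ((α c.1 c.2).choose (pos r) : ℂ)
        * MvPolynomial.X (c.1, α c.1 c.2 - pos r)
    ∀ m ∈ M.det.support,
      (m.sum fun p e => (p.2 + 1) * e)
        = ∑ j : Fin N, ∑ i : Fin (n j), (α j i - sAbove j - (i : ℕ) + 1) := by
  intro sAbove pos M m hm
  have hpos (r : Σ j, Fin (n j)) : pos r ≤ α r.1 r.2 :=
    Fin.add_le_of_strictMono (hmono r.1) (hbound r.1) r.2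
  have hM : M.det.IsWeightedHomogeneous (fun p : Fin N × ℕ => (p.2 : ℤ) + 1)
      (∑ c : Σ j, Fin (n j), ((α c.1 c.2 : ℤ) + 1) - ∑ r, (pos r : ℤ)) :=
    Matrix.det_isWeightedHomogeneous _ _ fun r c =>
      isWeightedHomogeneous_C_choose_mul_X c.1 (α c.1 c.2) (pos r)
  have hweight := hM (mem_support_iff.mp hm)
  have hlhs : ((m.sum fun p e => (p.2 + 1) * e : ℕ) : ℤ)
      = Finsupp.weight (fun p : Fin N × ℕ => (p.2 : ℤ) + 1) m := by
    simp [Finsupp.weight_apply, Finsupp.sum, mul_comm]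
  apply Nat.cast_injective (R := ℤ)
  rw [hlhs, hweight, Finset.sum_sigma', Finset.univ_sigma_univ, ← Finset.sum_sub_distrib]
  push_cast
  refine Finset.sum_congr rfl fun r _ => ?_
  have := hpos r
  simp only [pos] at this ⊢
  omega
end
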